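/- arXiv:1908.10704 — 6 statements merged into one kernel-verified Lean document; each statement's English description precedes it below -/
import Mathlib

section
/- Let Γ be a group, n a positive integer, and ρ₁, ρ₂ : Γ → Sp(2n,ℂ) two irreducible representations. If there exists M ∈ SL(2n,ℂ) such that M·ρ₁(γ)·M⁻¹ = ρ₂(γ) for all γ ∈ Γ, then there exists M₁ ∈ Sp(2n,ℂ) such that M₁·ρ₁(γ)·M₁⁻¹ = ρ₂(γ) for all γ ∈ Γ. -/
open Matrix

noncomputable section

/-- The standard symplectic matrix `J_{2n} = [[0, Iₙ],[−Iₙ, 0]]`. -/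
def Jmat (n : ℕ) : Matrix (Fin n ⊕ Fin n) (Fin n ⊕ Fin n) ℂ :=
  Matrix.fromBlocks 0 1 (-1) 0

/-- `M ∈ Sp(2n,ℂ)`, i.e. `ᵀM J_{2n} M = J_{2n}`. -/
def IsSymplectic {n : ℕ} (M : Matrix (Fin n ⊕ Fin n) (Fin n ⊕ Fin n) ℂ) : Prop :=
  Mᵀ * Jmat n * M = Jmat n

/-- A representation `ρ : Γ → GL(n,ℂ)` is irreducible if the only invariant
subspaces of `ℂⁿ` are `{0}` and `ℂⁿ`. -/
def MatIrreducible {Γ : Type*} [Group Γ] {ι : Type*} [Fintype ι] [DecidableEq ι]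
    (ρ : Γ →* Matrix.GeneralLinearGroup ι ℂ) : Prop :=
  ∀ W : Submodule ℂ (ι → ℂ),
    (∀ γ : Γ, ∀ x ∈ W, Matrix.mulVec (ρ γ : Matrix ι ι ℂ) x ∈ W) →
      W = ⊥ ∨ W = ⊤

/-- Schur's lemma: a matrix commuting with an irreducible representation is scalar. -/
lemma schur_aux {Γ : Type*} [Group Γ] {ι : Type*} [Fintype ι] [DecidableEq ι] [Nonempty ι]
    (ρ : Γ →* Matrix.GeneralLinearGroup ι ℂ) (hirr : MatIrreducible ρ)
    (A : Matrix ι ι ℂ)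
    (hcomm : ∀ γ : Γ, A * (ρ γ : Matrix ι ι ℂ) = (ρ γ : Matrix ι ι ℂ) * A) :
    ∃ c : ℂ, A = c • (1 : Matrix ι ι ℂ) := by
  obtain ⟨c, hc⟩ := Module.End.exists_eigenvalue (Matrix.mulVecLin A)
  refine ⟨c, ?_⟩
  set W := Module.End.eigenspace (Matrix.mulVecLin A) c with hWdef
  have hWinv : ∀ γ : Γ, ∀ x ∈ W, Matrix.mulVec (ρ γ : Matrix ι ι ℂ) x ∈ W := by
    intro γ x hx
    rw [hWdef, Module.End.mem_eigenspace_iff] at hx ⊢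
    simp only [Matrix.mulVecLin_apply] at hx ⊢
    rw [Matrix.mulVec_mulVec, hcomm γ, ← Matrix.mulVec_mulVec, hx,
      Matrix.mulVec_smul]
  have hWtop : W = ⊤ := by
    rcases hirr W hWinv with h | h
    · exact absurd h hc
    · exact h
  have hAx : ∀ x : ι → ℂ, A.mulVec x = c • x := by
    intro x
    have : x ∈ W := hWtop ▸ Submodule.mem_top
    rw [hWdef, Module.End.mem_eigenspace_iff] at this
    simpa using this
  apply Matrix.toLin'.injective
  ext x
  simp [Matrix.toLin'_apply, hAx, Matrix.smul_mulVec]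

theorem stmt1 {Γ : Type*} [Group Γ] {n : ℕ} (hn : 0 < n)
    (ρ₁ ρ₂ : Γ →* Matrix.GeneralLinearGroup (Fin n ⊕ Fin n) ℂ)
    (hsp₁ : ∀ γ : Γ, IsSymplectic (ρ₁ γ : Matrix (Fin n ⊕ Fin n) (Fin n ⊕ Fin n) ℂ))
    (hsp₂ : ∀ γ : Γ, IsSymplectic (ρ₂ γ : Matrix (Fin n ⊕ Fin n) (Fin n ⊕ Fin n) ℂ))
    (hirr₁ : MatIrreducible ρ₁) (hirr₂ : MatIrreducible ρ₂)
    (M : Matrix (Fin n ⊕ Fin n) (Fin n ⊕ Fin n) ℂ) (hdet : M.det = 1)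
    (hconj : ∀ γ : Γ, M * (ρ₁ γ : Matrix (Fin n ⊕ Fin n) (Fin n ⊕ Fin n) ℂ) * M⁻¹
        = (ρ₂ γ : Matrix (Fin n ⊕ Fin n) (Fin n ⊕ Fin n) ℂ)) :
    ∃ M₁ : Matrix (Fin n ⊕ Fin n) (Fin n ⊕ Fin n) ℂ, IsSymplectic M₁ ∧
      ∀ γ : Γ, M₁ * (ρ₁ γ : Matrix (Fin n ⊕ Fin n) (Fin n ⊕ Fin n) ℂ) * M₁⁻¹
        = (ρ₂ γ : Matrix (Fin n ⊕ Fin n) (Fin n ⊕ Fin n) ℂ) := by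
  have : Nonempty (Fin n) := ⟨⟨0, hn⟩⟩
  have hne : Nonempty (Fin n ⊕ Fin n) := ⟨Sum.inl ⟨0, hn⟩⟩
  set J := Jmat n with hJdef
  -- J * J = -1
  have hJJ : J * J = -1 := by
    rw [hJdef]
    unfold Jmat
    rw [Matrix.fromBlocks_multiply]
    ext (i|i) (j|j) <;>
      simp [Matrix.fromBlocks, Matrix.one_apply, Matrix.neg_apply]
  have hJmul : J * (-J) = 1 := by rw [mul_neg, hJJ, neg_neg]
  have hJunit : IsUnit J := ⟨⟨J, -J, hJmul, by rw [neg_mul, hJJ, neg_neg]⟩, rfl⟩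
  have hJd : IsUnit J.det := (Matrix.isUnit_iff_isUnit_det J).mp hJunit
  have hMd : IsUnit M.det := by rw [hdet]; exact isUnit_one
  haveI := M.invertibleOfIsUnitDet hMd
  haveI := J.invertibleOfIsUnitDet hJd
  have hMM : M⁻¹ * M = 1 := Matrix.nonsing_inv_mul M hMd
  have hMM' : M * M⁻¹ = 1 := Matrix.mul_nonsing_inv M hMd
  have hT : Mᵀ * M⁻¹ᵀ = 1 := by rw [← Matrix.transpose_mul, hMM, Matrix.transpose_one]
  have hT' : M⁻¹ᵀ * Mᵀ = 1 := by rw [← Matrix.transpose_mul, hMM', Matrix.transpose_one]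
  set B := Mᵀ * J * M with hBdef
  -- ρ₁ preserves B
  have hB : ∀ γ : Γ, (ρ₁ γ : Matrix (Fin n ⊕ Fin n) (Fin n ⊕ Fin n) ℂ)ᵀ * B
      * (ρ₁ γ : Matrix (Fin n ⊕ Fin n) (Fin n ⊕ Fin n) ℂ) = B := by
    intro γ
    set g := (ρ₁ γ : Matrix (Fin n ⊕ Fin n) (Fin n ⊕ Fin n) ℂ) with hgdef
    have H : (M * g * M⁻¹)ᵀ * J * (M * g * M⁻¹) = J := by
      rw [hconj γ]; exact hsp₂ γ
    have H2 : Mᵀ * ((M * g * M⁻¹)ᵀ * J * (M * g * M⁻¹)) * M = Mᵀ * J * M := by rw [H]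
    rw [hBdef]
    calc gᵀ * (Mᵀ * J * M) * g
        = Mᵀ * ((M * g * M⁻¹)ᵀ * J * (M * g * M⁻¹)) * M := by
          simp only [Matrix.transpose_mul, Matrix.transpose_nonsing_inv, mul_assoc]
          rw [hMM, mul_one]
          rw [show Mᵀ * (Mᵀ⁻¹ * (gᵀ * (Mᵀ * (J * (M * g))))) =
            (Mᵀ * Mᵀ⁻¹) * (gᵀ * (Mᵀ * (J * (M * g)))) from by rw [mul_assoc]]
          rw [show Mᵀ * Mᵀ⁻¹ = 1 from by
            rw [← Matrix.transpose_nonsing_inv, hT], one_mul]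
      _ = Mᵀ * J * M := H2
  -- commutation of J⁻¹ * B with ρ₁
  have hcomm : ∀ γ : Γ, (J⁻¹ * B) * (ρ₁ γ : Matrix (Fin n ⊕ Fin n) (Fin n ⊕ Fin n) ℂ)
      = (ρ₁ γ : Matrix (Fin n ⊕ Fin n) (Fin n ⊕ Fin n) ℂ) * (J⁻¹ * B) := by
    intro γ
    set g := (ρ₁ γ : Matrix (Fin n ⊕ Fin n) (Fin n ⊕ Fin n) ℂ) with hgdef
    have hgU : IsUnit g := (ρ₁ γ).isUnit
    have hgd : IsUnit g.det := (Matrix.isUnit_iff_isUnit_det g).mp hgU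
    have hgg : g * g⁻¹ = 1 := Matrix.mul_nonsing_inv g hgd
    have h1 : gᵀ * J * g = J := hsp₁ γ
    have hA : gᵀ * J = J * g⁻¹ := by
      have := congrArg (fun X => X * g⁻¹) h1
      simpa only [mul_assoc, hgg, mul_one] using this
    have hB' : J⁻¹ * gᵀ = g⁻¹ * J⁻¹ := by
      have := congrArg (fun X => J⁻¹ * X * J⁻¹) hA
      simp only [mul_assoc] at this
      rw [Matrix.mul_nonsing_inv J hJd, mul_one] at this
      rw [show J⁻¹ * (J * (g⁻¹ * J⁻¹)) = (J⁻¹ * J) * (g⁻¹ * J⁻¹) from by rw [mul_assoc],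
        Matrix.nonsing_inv_mul J hJd, one_mul] at this
      exact this
    have key : g * (J⁻¹ * B) = J⁻¹ * B * g := by
      conv_lhs => rw [← hB γ]
      simp only [← mul_assoc]
      rw [show g * J⁻¹ * gᵀ = g * (J⁻¹ * gᵀ) from by rw [mul_assoc], hB',
        show g * (g⁻¹ * J⁻¹) = (g * g⁻¹) * J⁻¹ from by rw [mul_assoc], hgg, one_mul]
    exact key.symm
  -- Schur: J⁻¹ * B = c • 1
  obtain ⟨c, hc⟩ := schur_aux ρ₁ hirr₁ (J⁻¹ * B) hcomm
  have hBc : B = c • J := by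
    have := congrArg (fun X => J * X) hc
    simp only [Matrix.mul_smul, mul_one] at this
    rw [show J * (J⁻¹ * B) = (J * J⁻¹) * B from by rw [mul_assoc],
      Matrix.mul_nonsing_inv J hJd, one_mul] at this
    exact this
  -- c ≠ 0
  have hBu : IsUnit B := by
    rw [hBdef]
    exact (((Matrix.isUnit_iff_isUnit_det _).mpr
      (by rw [Matrix.det_transpose, hdet]; exact isUnit_one)).mul hJunit).mul
      ((Matrix.isUnit_iff_isUnit_det _).mpr hMd)
  have hc0 : c ≠ 0 := by
    intro h
    rw [h, zero_smul] at hBc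
    exact (by simpa [hBc] using hBu : IsUnit (0 : Matrix (Fin n ⊕ Fin n) (Fin n ⊕ Fin n) ℂ)).ne_zero rfl
  obtain ⟨z, hz⟩ := IsAlgClosed.exists_pow_nat_eq (k := ℂ) c⁻¹ (n := 2) (by norm_num)
  have hz0 : z ≠ 0 := by
    intro h
    rw [h] at hz
    simp at hz
    exact hc0 hz.symm
  refine ⟨z • M, ?_, ?_⟩
  · show (z • M)ᵀ * J * (z • M) = J
    rw [Matrix.transpose_smul, Matrix.smul_mul, Matrix.smul_mul, Matrix.mul_smul,
      ← hBdef, hBc, smul_smul, smul_smul, ← pow_two, hz,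
      inv_mul_cancel₀ hc0, one_smul]
  · intro γ
    have hinv : (z • M)⁻¹ = z⁻¹ • M⁻¹ := by
      apply Matrix.inv_eq_right_inv
      rw [Matrix.smul_mul, Matrix.mul_smul, smul_smul, mul_inv_cancel₀ hz0, one_smul, hMM']
    rw [hinv, Matrix.smul_mul, Matrix.smul_mul, Matrix.mul_smul, smul_smul,
      mul_inv_cancel₀ hz0, one_smul, hconj γ]
end
end

section
/- Let n be a positive integer and let H be a 2n×2n Hermitian complex matrix such that ᵀH J_{2n} H = −J_{2n}. Then there exist a matrix V ∈ Sp(2n,ℂ) which is unitary (V* V = I_{2n}) and an n×n real diagonal matrix Λ with strictly positive diagonal entries such that V·H·V* equals the block-diagonal matrix [[Λ, 0],[0, −Λ⁻¹]]. -/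
open Matrix

noncomputable section

namespace SymplAux

variable {n : ℕ}

lemma Jmat_transpose (n : ℕ) : (Jmat n)ᵀ = -(Jmat n) := by
  ext (i | i) (j | j) <;> simp [Jmat, Matrix.fromBlocks, Matrix.one_apply, eq_comm]

lemma Jmat_mul_Jmat (n : ℕ) : Jmat n * Jmat n = -1 := by
  rw [Jmat, Matrix.fromBlocks_multiply]
  simp only [Matrix.mul_zero, Matrix.zero_mul, Matrix.mul_one, Matrix.one_mul,
    add_zero, zero_add, Matrix.mul_neg, Matrix.neg_mul]
  ext (i | i) (j | j) <;> simp [Matrix.fromBlocks, Matrix.one_apply]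

lemma Jmat_map_star (n : ℕ) : (Jmat n).map (starRingEnd ℂ) = Jmat n := by
  ext (i | i) (j | j) <;>
    simp [Jmat, Matrix.fromBlocks, Matrix.one_apply, apply_ite (starRingEnd ℂ)]

lemma neg_Jmat_mul_Jmat (n : ℕ) : (-(Jmat n)) * Jmat n = 1 := by
  rw [neg_mul, Jmat_mul_Jmat, neg_neg]

lemma Jmat_mul_neg_Jmat (n : ℕ) : Jmat n * (-(Jmat n)) = 1 := by
  rw [mul_neg, Jmat_mul_Jmat, neg_neg]

lemma transpose_symplectic {M : Matrix (Fin n ⊕ Fin n) (Fin n ⊕ Fin n) ℂ}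
    (h : Mᵀ * Jmat n * M = Jmat n) : M * Jmat n * Mᵀ = Jmat n := by
  have h1 : ((-(Jmat n)) * Mᵀ * Jmat n) * M = 1 := by
    calc ((-(Jmat n)) * Mᵀ * Jmat n) * M = (-(Jmat n)) * (Mᵀ * Jmat n * M) := by
          noncomm_ring
      _ = 1 := by rw [h, neg_Jmat_mul_Jmat]
  have h2 : M * ((-(Jmat n)) * Mᵀ * Jmat n) = 1 := mul_eq_one_comm.mpr h1
  have h3 : (M * Jmat n * Mᵀ) * (Jmat n * (-(Jmat n))) = Jmat n := by
    calc (M * Jmat n * Mᵀ) * (Jmat n * (-(Jmat n)))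
        = -(M * ((-(Jmat n)) * Mᵀ * Jmat n)) * (-(Jmat n)) := by noncomm_ring
      _ = Jmat n := by rw [h2]; noncomm_ring
  rwa [Jmat_mul_neg_Jmat, mul_one] at h3

lemma Jmat_conjTranspose (n : ℕ) : (Jmat n)ᴴ = -(Jmat n) := by
  ext (i | i) (j | j) <;>
    simp [Jmat, Matrix.fromBlocks, Matrix.one_apply, Matrix.conjTranspose_apply,
      apply_ite (starRingEnd ℂ), eq_comm]

lemma vecMul_Jmat {n : ℕ} (x : Fin n ⊕ Fin n → ℂ) :
    x ᵥ* Jmat n = -(Jmat n *ᵥ x) := by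
  rw [← Matrix.mulVec_transpose, Jmat_transpose, Matrix.neg_mulVec]

lemma JJvec {n : ℕ} (x : Fin n ⊕ Fin n → ℂ) :
    Jmat n *ᵥ (Jmat n *ᵥ x) = -x := by
  rw [Matrix.mulVec_mulVec, Jmat_mul_Jmat, Matrix.neg_mulVec, Matrix.one_mulVec]

end SymplAux

open SymplAux in
theorem stmt3 {n : ℕ} (hn : 0 < n)
    (H : Matrix (Fin n ⊕ Fin n) (Fin n ⊕ Fin n) ℂ)
    (hherm : H.IsHermitian) (hJ : Hᵀ * Jmat n * H = -(Jmat n)) :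
    ∃ V : Matrix (Fin n ⊕ Fin n) (Fin n ⊕ Fin n) ℂ,
      IsSymplectic V ∧ Vᴴ * V = 1 ∧
        ∃ Λ : Fin n → ℝ, (∀ i, 0 < Λ i) ∧
          V * H * Vᴴ =
            Matrix.fromBlocks (Matrix.diagonal (fun i => (Λ i : ℂ))) 0 0
              (-(Matrix.diagonal (fun i => (((Λ i)⁻¹ : ℝ) : ℂ)))) := by
  classical
  -- `Hᵀ` is the entrywise conjugate of `H`
  have hmapH : H.map (starRingEnd ℂ) = Hᵀ := by
    ext i j
    have h := congrFun (congrFun hherm.eq j) i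
    simpa [Matrix.conjTranspose_apply] using h
  -- the "anti-symplectic" relation for H and its transpose
  have hJ2 : H * Jmat n * Hᵀ = -(Jmat n) := by
    have h1 : (Jmat n * Hᵀ * Jmat n) * H = 1 := by
      calc (Jmat n * Hᵀ * Jmat n) * H = Jmat n * (Hᵀ * Jmat n * H) := by noncomm_ring
        _ = 1 := by rw [hJ, Jmat_mul_neg_Jmat]
    have h2 : H * (Jmat n * Hᵀ * Jmat n) = 1 := mul_eq_one_comm.mpr h1
    calc H * Jmat n * Hᵀ = H * Jmat n * Hᵀ * (Jmat n * -(Jmat n)) := by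
          rw [Jmat_mul_neg_Jmat, mul_one]
      _ = (H * (Jmat n * Hᵀ * Jmat n)) * -(Jmat n) := by noncomm_ring
      _ = -(Jmat n) := by rw [h2, one_mul]
  -- eigen-data
  set v : (Fin n ⊕ Fin n) → ((Fin n ⊕ Fin n) → ℂ) := fun a => ⇑(hherm.eigenvectorBasis a) with hvdef
  set μ : (Fin n ⊕ Fin n) → ℝ := hherm.eigenvalues with hμdef
  have hv : ∀ a, H *ᵥ v a = (μ a : ℂ) • v a := by
    intro a
    have h := hherm.mulVec_eigenvectorBasis a
    funext x
    have := congrFun h x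
    simpa [hvdef, hμdef, Complex.real_smul] using this
  have hvo : ∀ a b, star (v a) ⬝ᵥ v b = if a = b then 1 else 0 := by
    intro a b
    have h := orthonormal_iff_ite.mp hherm.eigenvectorBasis.orthonormal a b
    rw [EuclideanSpace.inner_eq_star_dotProduct, dotProduct_comm] at h
    exact h
  -- nonzero eigenvalues
  have hdet : H.det ≠ 0 := by
    have hdJ : (-(Jmat n)).det ≠ 0 := by
      have h := congrArg Matrix.det (neg_Jmat_mul_Jmat n)
      rw [Matrix.det_mul, Matrix.det_one] at h
      intro h0
      rw [h0, zero_mul] at h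
      exact one_ne_zero h.symm
    have h := congrArg Matrix.det hJ
    rw [Matrix.det_mul, Matrix.det_mul, Matrix.det_transpose] at h
    intro h0
    rw [h0, zero_mul, zero_mul] at h
    exact hdJ h.symm
  have hμ0 : ∀ a, μ a ≠ 0 := by
    intro a ha
    apply hdet
    rw [hherm.det_eq_prod_eigenvalues]
    exact Finset.prod_eq_zero (Finset.mem_univ a) (by simp [hμdef] at ha ⊢; simp [ha])
  -- orthogonality of eigenvectors with distinct eigenvalues
  have horth : ∀ (s t : ℝ) (x y : Fin n ⊕ Fin n → ℂ),
      H *ᵥ x = (s : ℂ) • x → H *ᵥ y = (t : ℂ) • y → s ≠ t → star x ⬝ᵥ y = 0 := by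
    intro s t x y hx hy hst
    have h1 : star x ⬝ᵥ (H *ᵥ y) = (t : ℂ) * (star x ⬝ᵥ y) := by
      rw [hy, dotProduct_smul, smul_eq_mul]
    have h2 : star x ⬝ᵥ (H *ᵥ y) = (s : ℂ) * (star x ⬝ᵥ y) := by
      rw [Matrix.dotProduct_mulVec]
      have hsx : star x ᵥ* H = (s : ℂ) • star x := by
        have h := congrArg star hx
        rw [Matrix.star_mulVec, hherm.eq] at h
        rw [h]
        ext k
        simp [Complex.conj_ofReal, mul_comm]
      rw [hsx, smul_dotProduct, smul_eq_mul]
    have h3 : ((s : ℂ) - t) * (star x ⬝ᵥ y) = 0 := by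
      rw [sub_mul, ← h1, ← h2, sub_self]
    rcases mul_eq_zero.mp h3 with h | h
    · exfalso
      apply hst
      have : (s : ℂ) = (t : ℂ) := sub_eq_zero.mp h
      exact_mod_cast this
    · exact h
  -- the antilinear map  c x = -(J *ᵥ star x)
  set c : ((Fin n ⊕ Fin n) → ℂ) → ((Fin n ⊕ Fin n) → ℂ) :=
    fun x => -(Jmat n *ᵥ star x) with hcdef
  have hstar_c : ∀ x, star (c x) = -(Jmat n *ᵥ x) := by
    intro x
    show star (-(Jmat n *ᵥ star x)) = -(Jmat n *ᵥ x)
    rw [star_neg, Matrix.star_mulVec, star_star, Jmat_conjTranspose, Matrix.vecMul_neg,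
      neg_neg, vecMul_Jmat]
  have hcc : ∀ x, c (c x) = -x := by
    intro x
    calc c (c x) = -(Jmat n *ᵥ star (c x)) := rfl
      _ = -(Jmat n *ᵥ (-(Jmat n *ᵥ x))) := by rw [hstar_c]
      _ = Jmat n *ᵥ (Jmat n *ᵥ x) := by rw [Matrix.mulVec_neg, neg_neg]
      _ = -x := JJvec x
  have hceig : ∀ (t : ℝ) (x : (Fin n ⊕ Fin n) → ℂ), t ≠ 0 → H *ᵥ x = (t : ℂ) • x →
      H *ᵥ c x = ((-t⁻¹ : ℝ) : ℂ) • c x := by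
    intro t x ht hx
    have ht' : (t : ℂ) ≠ 0 := by exact_mod_cast ht
    have hHT : Hᵀ *ᵥ star x = (t : ℂ) • star x := by
      have h := congrArg star hx
      rw [Matrix.star_mulVec, hherm.eq] at h
      rw [Matrix.mulVec_transpose]
      rw [h]
      ext k
      simp [Complex.conj_ofReal, mul_comm]
    have e2 : H *ᵥ (Jmat n *ᵥ (Hᵀ *ᵥ star x)) = -(Jmat n *ᵥ star x) := by
      rw [Matrix.mulVec_mulVec, Matrix.mulVec_mulVec, hJ2, Matrix.neg_mulVec]
    rw [hHT, Matrix.mulVec_smul, Matrix.mulVec_smul] at e2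
    have key : H *ᵥ (Jmat n *ᵥ star x) = ((-t⁻¹ : ℝ) : ℂ) • (Jmat n *ᵥ star x) := by
      calc H *ᵥ (Jmat n *ᵥ star x)
          = (t : ℂ)⁻¹ • ((t : ℂ) • (H *ᵥ (Jmat n *ᵥ star x))) := by
            rw [smul_smul, inv_mul_cancel₀ ht', one_smul]
        _ = (t : ℂ)⁻¹ • -(Jmat n *ᵥ star x) := by rw [e2]
        _ = ((-t⁻¹ : ℝ) : ℂ) • (Jmat n *ᵥ star x) := by
            push_cast
            rw [smul_neg, ← neg_smul]
    show H *ᵥ (-(Jmat n *ᵥ star x)) = ((-t⁻¹ : ℝ) : ℂ) • (-(Jmat n *ᵥ star x))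
    rw [Matrix.mulVec_neg, key, smul_neg]
  have hcinner : ∀ x y, star (c x) ⬝ᵥ c y = star y ⬝ᵥ x := by
    intro x y
    rw [hstar_c x]
    show (-(Jmat n *ᵥ x)) ⬝ᵥ (-(Jmat n *ᵥ star y)) = star y ⬝ᵥ x
    rw [neg_dotProduct, dotProduct_neg, neg_neg, dotProduct_comm,
      Matrix.dotProduct_mulVec, vecMul_Jmat, JJvec, neg_neg, dotProduct_comm]
  have homega : ∀ x y, x ⬝ᵥ (Jmat n *ᵥ y) = star (c x) ⬝ᵥ y := by
    intro x y
    rw [Matrix.dotProduct_mulVec, vecMul_Jmat, hstar_c]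
  -- counting
  have count : ∀ s : Finset (Fin n ⊕ Fin n),
      (∀ a ∈ s, ∀ b ∈ s, μ a ≠ -(μ b)⁻¹) → s.card ≤ n := by
    intro s hs
    set M : Matrix (↥s ⊕ ↥s) (Fin n ⊕ Fin n) ℂ :=
      Matrix.of (Sum.elim (fun a => v a.1) (fun a => c (v a.1))) with hM
    have hrow : ∀ a, M a = Sum.elim (fun a : ↥s => v a.1) (fun a : ↥s => c (v a.1)) a :=
      fun a => rfl
    have hGram : M * Mᴴ = 1 := by
      ext a b
      have hab : (M * Mᴴ) a b = star (M b) ⬝ᵥ M a := by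
        rw [Matrix.mul_apply, dotProduct]
        apply Finset.sum_congr rfl
        intro x _
        rw [Matrix.conjTranspose_apply]
        simp [mul_comm]
      rw [hab, hrow, hrow]
      rcases a with a | a <;> rcases b with b | b
      · rw [Sum.elim_inl, Sum.elim_inl, hvo]
        by_cases h : a = b
        · subst h; rw [if_pos rfl, Matrix.one_apply_eq]
        · rw [if_neg (fun hh : (b : Fin n ⊕ Fin n) = a => h (Subtype.ext hh.symm)),
            Matrix.one_apply_ne (by simpa using h)]
      · rw [Sum.elim_inl, Sum.elim_inr]
        rw [horth (-(μ b.1)⁻¹) (μ a.1) _ _ (hceig _ _ (hμ0 _) (hv _)) (hv _)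
          (Ne.symm (hs a.1 a.2 b.1 b.2))]
        simp [Matrix.one_apply]
      · rw [Sum.elim_inr, Sum.elim_inl]
        rw [horth (μ b.1) (-(μ a.1)⁻¹) _ _ (hv _) (hceig _ _ (hμ0 _) (hv _))
          (hs b.1 b.2 a.1 a.2)]
        simp [Matrix.one_apply]
      · rw [Sum.elim_inr, Sum.elim_inr, hcinner, hvo]
        by_cases h : a = b
        · subst h; rw [if_pos rfl, Matrix.one_apply_eq]
        · rw [if_neg (fun hh : (a : Fin n ⊕ Fin n) = b => h (Subtype.ext hh)),
            Matrix.one_apply_ne (by simpa using h)]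
    have h1 : Fintype.card (↥s ⊕ ↥s) = (M * Mᴴ).rank := by
      rw [hGram, Matrix.rank_one]
    have h2 : (M * Mᴴ).rank ≤ M.rank := Matrix.rank_mul_le_left _ _
    have h3 : M.rank ≤ Fintype.card (Fin n ⊕ Fin n) := Matrix.rank_le_card_width M
    have h4 := (h1 ▸ h2).trans h3
    rw [Fintype.card_sum, Fintype.card_sum, Fintype.card_coe, Fintype.card_fin] at h4
    omega
  set P := Finset.univ.filter (fun a => 0 < μ a) with hP
  have hPcard : P.card = n := by
    set N := Finset.univ.filter (fun a => μ a < 0) with hN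
    have hPle : P.card ≤ n := by
      apply count
      intro a ha b hb
      rw [hP, Finset.mem_filter] at ha
      rw [hP, Finset.mem_filter] at hb
      have hb' : 0 < (μ b)⁻¹ := inv_pos.mpr hb.2
      intro h
      rw [h] at ha
      linarith [ha.2]
    have hNle : N.card ≤ n := by
      apply count
      intro a ha b hb
      rw [hN, Finset.mem_filter] at ha
      rw [hN, Finset.mem_filter] at hb
      have hb' : (μ b)⁻¹ < 0 := inv_lt_zero.mpr hb.2
      intro h
      rw [h] at ha
      linarith [ha.2]
    have hPN : P.card + N.card = n + n := by
      have h0 := Finset.card_filter_add_card_filter_not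
        (s := (Finset.univ : Finset (Fin n ⊕ Fin n))) (p := fun a => 0 < μ a)
      have hfe : Finset.univ.filter (fun a => ¬ 0 < μ a) = N := by
        apply Finset.filter_congr
        intro a _
        simp only [not_lt, eq_iff_iff]
        constructor
        · intro h; exact lt_of_le_of_ne h (hμ0 a)
        · exact le_of_lt
      rw [hfe] at h0
      rw [← hP] at h0
      simpa [Fintype.card_sum] using h0
    omega
  have hPtype : Fintype.card ↥P = n := by rw [Fintype.card_coe]; exact hPcard
  let e : Fin n ≃ ↥P := (Fintype.equivFinOfCardEq hPtype).symm
  set u : Fin n → ((Fin n ⊕ Fin n) → ℂ) := fun i => v (e i).1 with hudef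
  set lam : Fin n → ℝ := fun i => μ (e i).1 with hlamdef
  have hlam : ∀ i, 0 < lam i := by
    intro i
    exact (Finset.mem_filter.mp (e i).2).2
  have hein : ∀ i j : Fin n, ((e i).1 = (e j).1) ↔ i = j := by
    intro i j
    constructor
    · intro h; exact e.injective (Subtype.ext h)
    · intro h; rw [h]
  set R : (Fin n ⊕ Fin n) → ((Fin n ⊕ Fin n) → ℂ) :=
    Sum.elim u (fun i => c (u i)) with hRdef
  have hueig : ∀ i, H *ᵥ u i = (lam i : ℂ) • u i := fun i => hv _
  have hceigu : ∀ i, H *ᵥ c (u i) = ((-(lam i)⁻¹ : ℝ) : ℂ) • c (u i) :=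
    fun i => hceig _ _ (hμ0 _) (hv _)
  have hne1 : ∀ i j : Fin n, lam i ≠ -(lam j)⁻¹ := by
    intro i j
    have h1 := hlam i
    have h2 : 0 < (lam j)⁻¹ := inv_pos.mpr (hlam j)
    intro h
    rw [h] at h1
    linarith
  have hne2 : ∀ i j : Fin n, -(lam i)⁻¹ ≠ lam j := fun i j => (hne1 j i).symm
  have huo : ∀ i j : Fin n, star (u i) ⬝ᵥ u j = if i = j then 1 else 0 := by
    intro i j
    have h := hvo (e i).1 (e j).1
    simp only [hudef]
    rw [h]
    by_cases hij : i = j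
    · subst hij; simp
    · rw [if_neg (fun hh => hij ((hein i j).mp hh)), if_neg hij]
  have hG : ∀ a b, star (R a) ⬝ᵥ R b = if a = b then 1 else 0 := by
    intro a b
    rcases a with i | i <;> rcases b with j | j <;>
      simp only [hRdef, Sum.elim_inl, Sum.elim_inr]
    · rw [huo]
      simp [Sum.inl.injEq]
    · rw [horth (lam i) (-(lam j)⁻¹) _ _ (hueig i) (hceigu j) (hne1 i j)]
      simp
    · rw [horth (-(lam i)⁻¹) (lam j) _ _ (hceigu i) (hueig j) (hne2 i j)]
      simp
    · rw [hcinner, huo]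
      simp [Sum.inr.injEq, eq_comm]
  have hOm : ∀ a b, R a ⬝ᵥ (Jmat n *ᵥ R b) = Jmat n a b := by
    intro a b
    rcases a with i | i <;> rcases b with j | j <;>
      simp only [hRdef, Sum.elim_inl, Sum.elim_inr] <;> rw [homega]
    · rw [horth (-(lam i)⁻¹) (lam j) _ _ (hceigu i) (hueig j) (hne2 i j)]
      simp [Jmat, Matrix.fromBlocks]
    · rw [hcinner, huo]
      simp [Jmat, Matrix.fromBlocks, Matrix.one_apply, eq_comm]
    · rw [hcc, star_neg, neg_dotProduct, huo]
      simp [Jmat, Matrix.fromBlocks, Matrix.one_apply]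
    · rw [hcc, star_neg, neg_dotProduct,
        horth (lam i) (-(lam j)⁻¹) _ _ (hueig i) (hceigu j) (hne1 i j)]
      simp [Jmat, Matrix.fromBlocks]
  set V : Matrix (Fin n ⊕ Fin n) (Fin n ⊕ Fin n) ℂ :=
    (Matrix.of R).map (starRingEnd ℂ) with hVdef
  have hVH : Vᴴ = (Matrix.of R)ᵀ := by
    ext i j
    simp [hVdef, Matrix.conjTranspose_apply, Matrix.map_apply]
  have hVrow : ∀ a, V a = star (R a) := by
    intro a
    funext x
    simp [hVdef, Matrix.map_apply]
  have hVHcol : ∀ b, (fun k => Vᴴ k b) = R b := by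
    intro b
    funext k
    rw [hVH]
    rfl
  have hVVH : V * Vᴴ = 1 := by
    ext a b
    have h1 : (V * Vᴴ) a b = star (R a) ⬝ᵥ R b := by
      rw [Matrix.mul_apply', show (fun j => Vᴴ j b) = R b from hVHcol b, hVrow a]
    rw [h1, hG, Matrix.one_apply]
  have hsymp : IsSymplectic V := by
    have hW : (Matrix.of R) * Jmat n * (Matrix.of R)ᵀ = Jmat n := by
      ext a b
      have h1 : ((Matrix.of R) * Jmat n * (Matrix.of R)ᵀ) a b
          = (R a ᵥ* Jmat n) ⬝ᵥ R b := by
        rw [Matrix.mul_apply']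
        rfl
      rw [h1, ← Matrix.dotProduct_mulVec, hOm]
    have hW2 : (Matrix.of R)ᵀ * Jmat n * (Matrix.of R) = Jmat n := by
      have h := transpose_symplectic (M := (Matrix.of R)ᵀ)
        (by rw [Matrix.transpose_transpose]; exact hW)
      rwa [Matrix.transpose_transpose] at h
    show Vᵀ * Jmat n * V = Jmat n
    have hVt : Vᵀ = ((Matrix.of R)ᵀ).map (starRingEnd ℂ) := by
      ext i j
      simp [hVdef, Matrix.map_apply, Matrix.transpose_apply]
    calc Vᵀ * Jmat n * V
        = (((Matrix.of R)ᵀ).map (starRingEnd ℂ)) * ((Jmat n).map (starRingEnd ℂ)) *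
            ((Matrix.of R).map (starRingEnd ℂ)) := by
          rw [hVt, Jmat_map_star, hVdef]
      _ = (((Matrix.of R)ᵀ) * Jmat n * (Matrix.of R)).map (starRingEnd ℂ) := by
          rw [Matrix.map_mul, Matrix.map_mul]
      _ = Jmat n := by rw [hW2, Jmat_map_star]
  have hReig : ∀ b, H *ᵥ R b =
      (Sum.elim (fun i => ((lam i : ℝ) : ℂ)) (fun i => ((-(lam i)⁻¹ : ℝ) : ℂ)) b) • R b := by
    intro b
    rcases b with j | j
    · exact hueig j
    · exact hceigu j
  refine ⟨V, hsymp, mul_eq_one_comm.mp hVVH, lam, hlam, ?_⟩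
  ext a b
  have h1 : (V * H * Vᴴ) a b = (star (R a) ᵥ* H) ⬝ᵥ R b := by
    rw [Matrix.mul_apply', show (fun j => Vᴴ j b) = R b from hVHcol b]
    congr 1
  rw [h1, ← Matrix.dotProduct_mulVec, hReig b, dotProduct_smul, smul_eq_mul, hG]
  rcases a with i | i <;> rcases b with j | j
  · by_cases h : i = j
    · subst h
      simp [Matrix.fromBlocks, Matrix.diagonal]
    · simp [Matrix.fromBlocks, Matrix.diagonal_apply_ne _ h, Sum.inl.injEq, h]
  · simp [Matrix.fromBlocks]
  · simp [Matrix.fromBlocks]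
  · by_cases h : i = j
    · subst h
      simp [Matrix.fromBlocks, Matrix.diagonal]
    · simp [Matrix.fromBlocks, Matrix.diagonal_apply_ne _ h, Sum.inr.injEq, h]
end
end

section
/- Let Γ be a group, n a positive integer, and ρ : Γ → Sp(2n,ℂ) an irreducible representation. Suppose there exists P ∈ GL(2n,ℂ) such that P·ρ(γ)·P⁻¹ = conj(ρ(γ)) for all γ ∈ Γ (ρ is conjugate to its entrywise complex conjugate). Then there exists S ∈ Sp(2n,ℂ) such that either (i) for all γ ∈ Γ the matrix S·ρ(γ)·S⁻¹ has real entries (so the conjugated representation takes values in Sp(2n,ℝ)), or (ii) there exist natural numbers p, q with p + q = n such that for all γ ∈ Γ, (S·ρ(γ)·S⁻¹)*·K_{p,q}·(S·ρ(γ)·S⁻¹) = K_{p,q} (so the conjugated representation takes values in Sp(2p,2q)). -/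
open Matrix

noncomputable section

/-- The matrix `I_{p,q} = diag(I_p, −I_q)` (of size `n`, with `p + q = n`). -/
def Ipq (n p : ℕ) : Matrix (Fin n) (Fin n) ℂ :=
  Matrix.diagonal (fun i => if (i : ℕ) < p then 1 else -1)

/-- The matrix `K_{p,q} = diag(I_{p,q}, I_{p,q})` of size `2n`. -/
def Kpq (n p : ℕ) : Matrix (Fin n ⊕ Fin n) (Fin n ⊕ Fin n) ℂ :=
  Matrix.fromBlocks (Ipq n p) 0 0 (Ipq n p)

set_option linter.unusedSectionVars false
set_option maxHeartbeats 1600000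

namespace Stmt5Aux
variable {ι : Type*} [Fintype ι] [DecidableEq ι]

/-- Bilinear form attached to a matrix. -/
def om (A : Matrix ι ι ℂ) (x y : ι → ℂ) : ℂ := x ⬝ᵥ A *ᵥ y

lemma om_add_left (A : Matrix ι ι ℂ) (x x' y : ι → ℂ) :
    om A (x + x') y = om A x y + om A x' y := by
  simp [om, add_dotProduct]

lemma om_add_right (A : Matrix ι ι ℂ) (x y y' : ι → ℂ) :
    om A x (y + y') = om A x y + om A x y' := by
  simp [om, mulVec_add, dotProduct_add]

lemma om_smul_left (A : Matrix ι ι ℂ) (t : ℂ) (x y : ι → ℂ) :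
    om A (t • x) y = t * om A x y := by
  simp [om, smul_dotProduct, smul_eq_mul]

lemma om_smul_right (A : Matrix ι ι ℂ) (t : ℂ) (x y : ι → ℂ) :
    om A x (t • y) = t * om A x y := by
  simp [om, mulVec_smul, dotProduct_smul, smul_eq_mul]

lemma om_neg_left (A : Matrix ι ι ℂ) (x y : ι → ℂ) :
    om A (-x) y = - om A x y := by
  simp [om, neg_dotProduct]

lemma om_sub_right (A : Matrix ι ι ℂ) (x y y' : ι → ℂ) :
    om A x (y - y') = om A x y - om A x y' := by
  simp [om, mulVec_sub, dotProduct_sub]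

lemma om_zero_right (A : Matrix ι ι ℂ) (x : ι → ℂ) : om A x 0 = 0 := by
  simp [om]

lemma om_antisymm {A : Matrix ι ι ℂ} (hA : Aᵀ = -A) (x y : ι → ℂ) :
    om A y x = - om A x y := by
  have h1 : A *ᵥ x = x ᵥ* Aᵀ := (vecMul_transpose A x).symm
  calc om A y x = y ⬝ᵥ A *ᵥ x := rfl
    _ = (A *ᵥ x) ⬝ᵥ y := dotProduct_comm _ _
    _ = (x ᵥ* Aᵀ) ⬝ᵥ y := by rw [h1]
    _ = (x ᵥ* (-A)) ⬝ᵥ y := by rw [hA]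
    _ = - (x ᵥ* A ⬝ᵥ y) := by simp [vecMul_neg, neg_dotProduct]
    _ = - om A x y := by rw [om, dotProduct_mulVec]

lemma om_self {A : Matrix ι ι ℂ} (hA : Aᵀ = -A) (x : ι → ℂ) : om A x x = 0 := by
  have := om_antisymm hA x x
  linear_combination this / 2

/-- `om` in the second variable, as a linear map. -/
def omL (A : Matrix ι ι ℂ) (x : ι → ℂ) : (ι → ℂ) →ₗ[ℂ] ℂ where
  toFun y := om A x y
  map_add' y y' := om_add_right A x y y'
  map_smul' t y := by simp [om_smul_right]

@[simp] lemma omL_apply (A : Matrix ι ι ℂ) (x y : ι → ℂ) : omL A x y = om A x y := rfl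

lemma om_mulVec_mulVec (A Q : Matrix ι ι ℂ) (u v : ι → ℂ) :
    om A (Q *ᵥ u) (Q *ᵥ v) = om (Qᵀ * A * Q) u v := by
  simp only [om, mulVec_mulVec]
  rw [← vecMul_transpose, ← dotProduct_mulVec, mulVec_mulVec, Matrix.mul_assoc]

lemma om_star_star (A : Matrix ι ι ℂ) (x y : ι → ℂ) :
    om A (star x) (star y) = starRingEnd ℂ (om (A.map (starRingEnd ℂ)) x y) := by
  simp [om, dotProduct, mulVec, map_sum, Matrix.map_apply, Finset.mul_sum]


/-- The key dimension/nondegeneracy step: splitting off a hyperbolic pair. -/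
lemma step (A : Matrix ι ι ℂ) (hA : Aᵀ = -A) (W : Submodule ℂ (ι → ℂ))
    (hnd : ∀ x ∈ W, (∀ y ∈ W, om A x y = 0) → x = 0)
    (e f : ι → ℂ) (he : e ∈ W) (hf : f ∈ W) (hef : om A e f = 1) :
    ∃ W' : Submodule ℂ (ι → ℂ), W' ≤ W ∧
      (∀ x ∈ W', om A e x = 0) ∧ (∀ x ∈ W', om A f x = 0) ∧
      (∀ x ∈ W, om A e x = 0 → om A f x = 0 → x ∈ W') ∧
      (∀ x ∈ W', (∀ y ∈ W', om A x y = 0) → x = 0) ∧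
      Module.finrank ℂ W' + 2 = Module.finrank ℂ W := by
  classical
  set K : Submodule ℂ (ι → ℂ) := LinearMap.ker (omL A e) ⊓ LinearMap.ker (omL A f) with hK
  refine ⟨W ⊓ K, inf_le_left, ?_, ?_, ?_, ?_, ?_⟩
  · rintro x ⟨-, hx1, -⟩; simpa using hx1
  · rintro x ⟨-, -, hx2⟩; simpa using hx2
  · intro x hxW hx1 hx2
    refine ⟨hxW, ?_, ?_⟩ <;> simp [LinearMap.mem_ker, hx1, hx2]
  · -- nondegeneracy
    rintro x ⟨hxW, hxe, hxf⟩ hx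
    refine hnd x hxW ?_
    intro w hw
    have hfe : om A f e = -1 := by rw [om_antisymm hA, hef]
    set w' : ι → ℂ := w + (om A f w) • e - (om A e w) • f with hw'
    have hw'W : w' ∈ W := by
      exact Submodule.sub_mem _ (Submodule.add_mem _ hw (Submodule.smul_mem _ _ he))
        (Submodule.smul_mem _ _ hf)
    have hw'e : om A e w' = 0 := by
      simp [hw', om_sub_right, om_add_right, om_smul_right, om_self hA, hef]
    have hw'f : om A f w' = 0 := by
      simp [hw', om_sub_right, om_add_right, om_smul_right, om_self hA, hfe]
    have hxw' : om A x w' = 0 := hx w' ⟨hw'W, by simpa using hw'e, by simpa using hw'f⟩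
    have hxe' : om A x e = 0 := by
      rw [om_antisymm hA]; simpa using hxe
    have hxf' : om A x f = 0 := by
      rw [om_antisymm hA]; simpa using hxf
    have := hxw'
    rw [hw', om_sub_right, om_add_right, om_smul_right, om_smul_right, hxe', hxf'] at this
    simpa using this
  · -- rank
    set Ψ : W →ₗ[ℂ] ℂ × ℂ := ((omL A e).prod (omL A f)).domRestrict W with hΨ
    have hrk := LinearMap.finrank_range_add_finrank_ker Ψ
    have hker : LinearMap.ker Ψ = Submodule.comap W.subtype (W ⊓ K) := by
      ext ⟨x, hxW⟩
      simp only [LinearMap.mem_ker, hΨ, LinearMap.domRestrict_apply, Submodule.mem_comap,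
        Submodule.subtype_apply, Submodule.mem_inf, LinearMap.prod_apply, Function.prod,
        LinearMap.mem_ker, hK, Prod.mk_eq_zero]
      tauto
    have hrange : LinearMap.range Ψ = ⊤ := by
      rw [eq_top_iff]
      rintro ⟨a, b⟩ -
      refine ⟨a • ⟨f, hf⟩ + (-b) • ⟨e, he⟩, ?_⟩
      have h1 : Ψ ⟨f, hf⟩ = (1, 0) := by
        simp [hΨ, hef, om_self hA]
      have h2 : Ψ ⟨e, he⟩ = (0, -1) := by
        have hfe : om A f e = -1 := by rw [om_antisymm hA, hef]
        simp [hΨ, hfe, om_self hA]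
      rw [map_add, LinearMap.map_smul, LinearMap.map_smul, h1, h2]
      simp [Prod.ext_iff]
    have e1 : Module.finrank ℂ (LinearMap.range Ψ) = 2 := by
      rw [hrange]
      simpa using (Module.finrank_prod (R := ℂ) (M := ℂ) (M' := ℂ))
    have e2 : Module.finrank ℂ (LinearMap.ker Ψ) = Module.finrank ℂ (W ⊓ K : Submodule ℂ (ι → ℂ)) := by
      rw [hker]
      exact LinearEquiv.finrank_eq (Submodule.comapSubtypeEquivOfLe inf_le_left)
    rw [e1, e2] at hrk
    omega

def sig (Q : Matrix ι ι ℂ) (x : ι → ℂ) : ι → ℂ := Q *ᵥ (star x)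

lemma star_mulVec' (M : Matrix ι ι ℂ) (v : ι → ℂ) :
    star (M *ᵥ v) = (M.map (starRingEnd ℂ)) *ᵥ (star v) := by
  ext i
  simp only [Pi.star_apply, mulVec, dotProduct, Matrix.map_apply]
  rw [star_sum]
  refine Finset.sum_congr rfl fun j _ => ?_
  simp only [star_mul']
  rfl

lemma sig_add (Q : Matrix ι ι ℂ) (x y : ι → ℂ) :
    sig Q (x + y) = sig Q x + sig Q y := by
  simp [sig, star_add, mulVec_add]

lemma sig_sub (Q : Matrix ι ι ℂ) (x y : ι → ℂ) :
    sig Q (x - y) = sig Q x - sig Q y := by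
  simp [sig, star_sub, mulVec_sub]

lemma sig_smul (Q : Matrix ι ι ℂ) (t : ℂ) (x : ι → ℂ) :
    sig Q (t • x) = (starRingEnd ℂ t) • sig Q x := by
  unfold sig
  rw [star_smul, mulVec_smul, starRingEnd_apply]

lemma sig_zero (Q : Matrix ι ι ℂ) : sig Q 0 = 0 := by simp [sig]

lemma sig_sig {Q : Matrix ι ι ℂ} {c : ℂ} (hQQ : Q * Q.map (starRingEnd ℂ) = c • 1)
    (x : ι → ℂ) : sig Q (sig Q x) = c • x := by
  unfold sig
  rw [star_mulVec', star_star, mulVec_mulVec, hQQ, smul_mulVec, one_mulVec]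

lemma om_sig_sig {A Q : Matrix ι ι ℂ} (hAc : A.map (starRingEnd ℂ) = A)
    (hQA : Qᵀ * A * Q = A) (x y : ι → ℂ) :
    om A (sig Q x) (sig Q y) = starRingEnd ℂ (om A x y) := by
  unfold sig
  rw [om_mulVec_mulVec, hQA, om_star_star, hAc]

def hm (A Q : Matrix ι ι ℂ) (x y : ι → ℂ) : ℂ := om A (sig Q x) y

lemma consGram {m : ℕ} (G : (ι → ℂ) → (ι → ℂ) → ℂ) (v w : Fin m → (ι → ℂ))
    (d : Fin (m + 1) → ℂ) (a b : ι → ℂ)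
    (hab : G a b = d 0) (hav : ∀ j, G a (w j) = 0) (hva : ∀ i, G (v i) b = 0)
    (hvw : ∀ i j, G (v i) (w j) = if i = j then d i.succ else 0) :
    ∀ i j, G ((Fin.cons a v : Fin (m+1) → ι → ℂ) i) ((Fin.cons b w : Fin (m+1) → ι → ℂ) j)
      = if i = j then d i else 0 := by
  intro i j
  induction i using Fin.cases with
  | zero =>
    induction j using Fin.cases with
    | zero => simpa using hab
    | succ j' => simpa [(Fin.succ_ne_zero j').symm] using hav j'
  | succ i' =>
    induction j using Fin.cases with
    | zero => simpa [Fin.succ_ne_zero i'] using hva i'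
    | succ j' => simpa [Fin.succ_inj] using hvw i' j'

/-- Quaternionic Gram–Schmidt induction. -/
lemma quatInd (A Q : Matrix ι ι ℂ) (hA : Aᵀ = -A) (hAc : A.map (starRingEnd ℂ) = A)
    (hQA : Qᵀ * A * Q = A) (hQQ : Q * Q.map (starRingEnd ℂ) = (-1 : ℂ) • 1) :
    ∀ m : ℕ, ∀ W : Submodule ℂ (ι → ℂ),
    (∀ x ∈ W, sig Q x ∈ W) →
    (∀ x ∈ W, (∀ y ∈ W, om A x y = 0) → x = 0) →
    Module.finrank ℂ W = 2 * m →
    ∃ (e f : Fin m → (ι → ℂ)) (ε : Fin m → ℂ),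
      (∀ i, e i ∈ W) ∧ (∀ i, f i ∈ W) ∧
      (∀ i, ε i = 1 ∨ ε i = -1) ∧
      (∀ i j, om A (e i) (e j) = 0) ∧
      (∀ i j, om A (f i) (f j) = 0) ∧
      (∀ i j, om A (e i) (f j) = if i = j then 1 else 0) ∧
      (∀ i j, hm A Q (e i) (e j) = if i = j then ε i else 0) ∧
      (∀ i j, hm A Q (f i) (f j) = if i = j then ε i else 0) ∧
      (∀ i j, hm A Q (e i) (f j) = 0) ∧
      (∀ i j, hm A Q (f i) (e j) = 0) := by
  have hherm : ∀ x y : ι → ℂ, starRingEnd ℂ (hm A Q x y) = hm A Q y x := by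
    intro x y
    have h1 : om A (sig Q (sig Q x)) (sig Q y) = starRingEnd ℂ (om A (sig Q x) y) :=
      om_sig_sig hAc hQA _ _
    have h2 : sig Q (sig Q x) = (-1 : ℂ) • x := sig_sig hQQ x
    rw [h2, om_smul_left] at h1
    rw [hm, hm, ← h1, om_antisymm hA]
    ring
  intro m
  induction m with
  | zero =>
    intro W _ _ _
    refine ⟨Fin.elim0, Fin.elim0, Fin.elim0, ?_, ?_, ?_, ?_, ?_, ?_, ?_, ?_, ?_, ?_⟩ <;>
      exact fun i => i.elim0
  | succ m IH =>
    intro W hWsig hWnd hWrk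
    obtain ⟨x₀, hx₀W, hx₀⟩ : ∃ x₀ ∈ W, x₀ ≠ 0 := by
      by_contra hcon
      push_neg at hcon
      have hbot : W = ⊥ := (Submodule.eq_bot_iff W).2 hcon
      rw [hbot] at hWrk
      simp [finrank_bot] at hWrk
    obtain ⟨v, hvW, hv⟩ : ∃ v ∈ W, hm A Q v v ≠ 0 := by
      by_contra hcon
      push_neg at hcon
      have hall : ∀ x ∈ W, ∀ y ∈ W, hm A Q x y = 0 := by
        intro x hx y hy
        have h1 := hcon (x + y) (W.add_mem hx hy)
        have h2 := hcon (x + Complex.I • y) (W.add_mem hx (W.smul_mem _ hy))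
        have hx' := hcon x hx
        have hy' := hcon y hy
        have e1 : ∀ u w : ι → ℂ, hm A Q (u + w) (u + w)
            = hm A Q u u + hm A Q u w + hm A Q w u + hm A Q w w := by
          intro u w
          simp only [hm, sig_add, om_add_left, om_add_right]
          ring
        have e2 : hm A Q x (Complex.I • y) = Complex.I * hm A Q x y := by
          rw [hm, om_smul_right]; rfl
        have e3 : hm A Q (Complex.I • y) x
            = starRingEnd ℂ Complex.I * hm A Q y x := by
          rw [hm, sig_smul, om_smul_left]; rfl
        have e4 : hm A Q (Complex.I • y) (Complex.I • y)
            = starRingEnd ℂ Complex.I * (Complex.I * hm A Q y y) := by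
          rw [hm, sig_smul, om_smul_left, om_smul_right]; rfl
        rw [e1] at h1 h2
        rw [e2, e3, e4, hx', hy'] at h2
        rw [hx', hy'] at h1
        rw [Complex.conj_I] at h2
        have h1' : hm A Q x y + hm A Q y x = 0 := by linear_combination h1
        have h2' : hm A Q x y - hm A Q y x = 0 := by
          linear_combination (-Complex.I) * h2
            + (hm A Q x y - hm A Q y x) * Complex.I_sq
        linear_combination (h1' + h2') / 2
      have hsx : sig Q x₀ = 0 :=
        hWnd (sig Q x₀) (hWsig x₀ hx₀W) (fun y hy => hall x₀ hx₀W y hy)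
      refine hx₀ ?_
      have h5 := sig_sig hQQ x₀
      rw [hsx, sig_zero] at h5
      have h6 : (-1 : ℂ) • x₀ = 0 := h5.symm
      simpa [neg_smul] using h6
    -- normalize v
    set a := hm A Q v v with ha
    have haR : starRingEnd ℂ a = a := hherm v v
    have haRe : ((a.re : ℝ) : ℂ) = a := Complex.conj_eq_iff_re.mp haR
    set r := a.re with hr
    have hrne : r ≠ 0 := by
      intro h
      apply hv
      rw [← haRe, h]
      simp
    set s : ℝ := Real.sqrt |r| with hs
    have hspos : 0 < s := Real.sqrt_pos.mpr (abs_pos.mpr hrne)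
    have hss : s * s = |r| := Real.mul_self_sqrt (abs_nonneg r)
    set e : ι → ℂ := ((s⁻¹ : ℝ) : ℂ) • v with hedef
    set ε : ℂ := ((r / |r| : ℝ) : ℂ) with hεdef
    have hεpm : ε = 1 ∨ ε = -1 := by
      rcases lt_or_gt_of_ne hrne with h | h
      · right
        rw [hεdef, abs_of_neg h]
        rw [div_neg, div_self hrne]
        push_cast
        ring
      · left
        rw [hεdef, abs_of_pos h, div_self hrne]
        push_cast
        ring
    have hε2 : ε * ε = 1 := by rcases hεpm with h | h <;> rw [h] <;> ring
    have hεreal : starRingEnd ℂ ε = ε := by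
      rcases hεpm with h | h <;> rw [h] <;> simp
    have hee : hm A Q e e = ε := by
      have hc : hm A Q e e = (↑(s⁻¹) * ↑(s⁻¹) : ℂ) * a := by
        rw [hedef, hm, sig_smul, om_smul_left, om_smul_right, Complex.conj_ofReal]
        rw [ha, hm]
        ring
      rw [hc, ← haRe, hεdef]
      rw [show ((s⁻¹:ℝ):ℂ) * ((s⁻¹:ℝ):ℂ) = (((s*s)⁻¹ : ℝ) : ℂ) by push_cast; ring]
      rw [hss]
      push_cast
      ring
    set f : ι → ℂ := (-ε) • sig Q e with hfdef
    have hσeW : sig Q e ∈ W := hWsig e (W.smul_mem _ hvW)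
    have heW : e ∈ W := W.smul_mem _ hvW
    have hfW : f ∈ W := W.smul_mem _ hσeW
    have hσe_eq : sig Q e = (-ε) • f := by
      rw [hfdef, smul_smul]
      have : (-ε) * (-ε) = 1 := by linear_combination hε2
      rw [this, one_smul]
    have hσf_eq : sig Q f = ε • e := by
      rw [hfdef, sig_smul, sig_sig hQQ, map_neg, hεreal, smul_smul]
      have h9 : (-ε : ℂ) * (-1) = ε := by ring
      rw [h9]
    have hse_e : om A (sig Q e) e = ε := hee
    have he_se : om A e (sig Q e) = -ε := by
      rw [om_antisymm hA, hse_e]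
    have hef1 : om A e f = 1 := by
      rw [hfdef, om_smul_right, he_se]
      linear_combination hε2
    have homee : om A e e = 0 := om_self hA e
    have homff : om A f f = 0 := om_self hA f
    have hmff : hm A Q f f = ε := by
      rw [hm, hσf_eq, om_smul_left, hfdef, om_smul_right, he_se]
      linear_combination ε * hε2
    have hmef : hm A Q e f = 0 := by
      rw [hm, hσe_eq, om_smul_left, homff]; ring
    have hmfe : hm A Q f e = 0 := by
      rw [hm, hσf_eq, om_smul_left, homee]; ring
    obtain ⟨W', hW'le, hW'e, hW'f, hW'mem, hW'nd, hW'rk⟩ :=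
      step A hA W hWnd e f heW hfW hef1
    have hW'rk' : Module.finrank ℂ W' = 2 * m := by omega
    have hW'sig : ∀ x ∈ W', sig Q x ∈ W' := by
      intro x hx
      refine hW'mem (sig Q x) (hWsig x (hW'le hx)) ?_ ?_
      · -- om e (sig x) = 0
        have he2 : e = (-1 : ℂ) • sig Q (sig Q e) := by
          rw [sig_sig hQQ, smul_smul]; norm_num
        rw [he2, om_smul_left, om_sig_sig hAc hQA, hσe_eq, om_smul_left]
        rw [hW'f x hx]
        simp
      · have hf2 : f = (-1 : ℂ) • sig Q (sig Q f) := by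
          rw [sig_sig hQQ, smul_smul]; norm_num
        rw [hf2, om_smul_left, om_sig_sig hAc hQA, hσf_eq, om_smul_left]
        rw [hW'e x hx]
        simp
    obtain ⟨e', f', ε', hmem_e', hmem_f', hε', goe, gof, goef, ghe, ghf, ghef, ghfe⟩ :=
      IH W' hW'sig hW'nd hW'rk'
    -- cross facts
    have cr_oe : ∀ x ∈ W', om A x e = 0 := by
      intro x hx; rw [om_antisymm hA, hW'e x hx]; ring
    have cr_of : ∀ x ∈ W', om A x f = 0 := by
      intro x hx; rw [om_antisymm hA, hW'f x hx]; ring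
    have cr_he : ∀ x ∈ W', hm A Q e x = 0 := by
      intro x hx
      rw [hm, hσe_eq, om_smul_left, hW'f x hx]; ring
    have cr_hf : ∀ x ∈ W', hm A Q f x = 0 := by
      intro x hx
      rw [hm, hσf_eq, om_smul_left, hW'e x hx]; ring
    have cr_he' : ∀ x ∈ W', hm A Q x e = 0 := by
      intro x hx
      rw [hm, om_antisymm hA, hW'e _ (hW'sig x hx)]; ring
    have cr_hf' : ∀ x ∈ W', hm A Q x f = 0 := by
      intro x hx
      rw [hm, om_antisymm hA, hW'f _ (hW'sig x hx)]; ring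
    refine ⟨Fin.cons e e', Fin.cons f f', Fin.cons ε ε', ?_, ?_, ?_, ?_, ?_, ?_, ?_, ?_, ?_, ?_⟩
    · intro i
      induction i using Fin.cases with
      | zero => simpa using heW
      | succ i' => simpa using hW'le (hmem_e' i')
    · intro i
      induction i using Fin.cases with
      | zero => simpa using hfW
      | succ i' => simpa using hW'le (hmem_f' i')
    · intro i
      induction i using Fin.cases with
      | zero => simpa using hεpm
      | succ i' => simpa using hε' i'
    · intro i j
      have := consGram (om A) e' e' (fun _ => 0) e e
        (by simpa using homee) (fun j => hW'e _ (hmem_e' j)) (fun i => cr_oe _ (hmem_e' i))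
        (fun i j => by simpa using goe i j)
      simpa using this i j
    · intro i j
      have := consGram (om A) f' f' (fun _ => 0) f f
        (by simpa using homff) (fun j => hW'f _ (hmem_f' j)) (fun i => cr_of _ (hmem_f' i))
        (fun i j => by simpa using gof i j)
      simpa using this i j
    · exact consGram (om A) e' f' (fun _ => 1) e f
        (by simpa using hef1) (fun j => hW'e _ (hmem_f' j)) (fun i => cr_of _ (hmem_e' i))
        (fun i j => by simpa using goef i j)
    · exact consGram (hm A Q) e' e' (Fin.cons ε ε') e e
        (by simpa using hee) (fun j => cr_he _ (hmem_e' j)) (fun i => cr_he' _ (hmem_e' i))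
        (fun i j => by simpa using ghe i j)
    · exact consGram (hm A Q) f' f' (Fin.cons ε ε') f f
        (by simpa using hmff) (fun j => cr_hf _ (hmem_f' j)) (fun i => cr_hf' _ (hmem_f' i))
        (fun i j => by simpa using ghf i j)
    · intro i j
      have := consGram (hm A Q) e' f' (fun _ => 0) e f
        (by simpa using hmef) (fun j => cr_he _ (hmem_f' j)) (fun i => cr_hf' _ (hmem_e' i))
        (fun i j => by simpa using ghef i j)
      simpa using this i j
    · intro i j
      have := consGram (hm A Q) f' e' (fun _ => 0) f e
        (by simpa using hmfe) (fun j => cr_hf _ (hmem_e' j)) (fun i => cr_he' _ (hmem_f' i))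
        (fun i j => by simpa using ghfe i j)
      simpa using this i j

/-- Real Gram–Schmidt induction. -/
lemma realInd (A Q : Matrix ι ι ℂ) (hA : Aᵀ = -A) (hAc : A.map (starRingEnd ℂ) = A)
    (hQA : Qᵀ * A * Q = A) (hQQ : Q * Q.map (starRingEnd ℂ) = (1 : ℂ) • 1) :
    ∀ m : ℕ, ∀ W : Submodule ℂ (ι → ℂ),
    (∀ x ∈ W, sig Q x ∈ W) →
    (∀ x ∈ W, (∀ y ∈ W, om A x y = 0) → x = 0) →
    Module.finrank ℂ W = 2 * m →
    ∃ (e f : Fin m → (ι → ℂ)),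
      (∀ i, e i ∈ W) ∧ (∀ i, f i ∈ W) ∧
      (∀ i, sig Q (e i) = e i) ∧ (∀ i, sig Q (f i) = f i) ∧
      (∀ i j, om A (e i) (e j) = 0) ∧
      (∀ i j, om A (f i) (f j) = 0) ∧
      (∀ i j, om A (e i) (f j) = if i = j then 1 else 0) := by
  intro m
  induction m with
  | zero =>
    intro W _ _ _
    exact ⟨Fin.elim0, Fin.elim0, fun i => i.elim0, fun i => i.elim0, fun i => i.elim0,
      fun i => i.elim0, fun i => i.elim0, fun i => i.elim0, fun i => i.elim0⟩
  | succ m IH =>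
    intro W hWsig hWnd hWrk
    obtain ⟨x₀, hx₀W, hx₀⟩ : ∃ x₀ ∈ W, x₀ ≠ 0 := by
      by_contra hcon
      push_neg at hcon
      have hbot : W = ⊥ := (Submodule.eq_bot_iff W).2 hcon
      rw [hbot] at hWrk
      simp [finrank_bot] at hWrk
    -- produce a nonzero σ-fixed vector
    obtain ⟨e₁, he₁W, he₁σ, he₁⟩ : ∃ u ∈ W, sig Q u = u ∧ u ≠ 0 := by
      by_cases hu : x₀ + sig Q x₀ = 0
      · refine ⟨Complex.I • x₀, W.smul_mem _ hx₀W, ?_, ?_⟩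
        · rw [sig_smul, Complex.conj_I]
          have hsx : sig Q x₀ = -x₀ := by
            have h := hu
            rw [add_comm, add_eq_zero_iff_eq_neg] at h
            exact h
          rw [hsx]
          ext i
          simp only [Pi.smul_apply, Pi.neg_apply, smul_eq_mul]
          ring
        · exact smul_ne_zero Complex.I_ne_zero hx₀
      · refine ⟨x₀ + sig Q x₀, W.add_mem hx₀W (hWsig _ hx₀W), ?_, hu⟩
        rw [sig_add]
        have h2 : sig Q (sig Q x₀) = x₀ := by
          rw [sig_sig hQQ, one_smul]
        rw [h2, add_comm]
    -- produce a σ-fixed partner with nonzero pairing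
    obtain ⟨f₂, hf₂W, hf₂σ, hf₂⟩ : ∃ u ∈ W, sig Q u = u ∧ om A e₁ u ≠ 0 := by
      by_contra hcon
      push_neg at hcon
      refine he₁ (hWnd e₁ he₁W ?_)
      intro y hyW
      have hu₁ : y + sig Q y ∈ W := W.add_mem hyW (hWsig _ hyW)
      have hu₁σ : sig Q (y + sig Q y) = y + sig Q y := by
        rw [sig_add, sig_sig hQQ, one_smul, add_comm]
      have hu₂ : Complex.I • (y - sig Q y) ∈ W :=
        W.smul_mem _ (W.sub_mem hyW (hWsig _ hyW))
      have hu₂σ : sig Q (Complex.I • (y - sig Q y)) = Complex.I • (y - sig Q y) := by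
        rw [sig_smul, Complex.conj_I, sig_sub, sig_sig hQQ, one_smul, neg_smul, smul_sub,
          smul_sub, neg_sub]
      have hz₁ := hcon _ hu₁ hu₁σ
      have hz₂ := hcon _ hu₂ hu₂σ
      -- y = 2⁻¹ • (u₁ + (-I) • u₂)
      have hdecomp : y = (2⁻¹ : ℂ) • ((y + sig Q y) + (-Complex.I) • (Complex.I • (y - sig Q y))) := by
        rw [smul_smul]
        have h3 : (-Complex.I) * Complex.I = 1 := by
          rw [neg_mul, Complex.I_mul_I, neg_neg]
        rw [h3, one_smul]
        ext i
        simp only [Pi.smul_apply, Pi.add_apply, Pi.sub_apply, smul_eq_mul]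
        ring
      rw [hdecomp, om_smul_right, om_add_right, om_smul_right, hz₁, hz₂]
      ring
    set t := om A e₁ f₂ with ht
    have htreal : starRingEnd ℂ t = t := by
      rw [ht, ← om_sig_sig hAc hQA e₁ f₂, he₁σ, hf₂σ]
    set f₁ : ι → ℂ := t⁻¹ • f₂ with hf₁def
    have hf₁W : f₁ ∈ W := W.smul_mem _ hf₂W
    have hf₁σ : sig Q f₁ = f₁ := by
      rw [hf₁def, sig_smul, map_inv₀, htreal, hf₂σ]
    have hef1 : om A e₁ f₁ = 1 := by
      rw [hf₁def, om_smul_right, ← ht, inv_mul_cancel₀ hf₂]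
    obtain ⟨W', hW'le, hW'e, hW'f, hW'mem, hW'nd, hW'rk⟩ :=
      step A hA W hWnd e₁ f₁ he₁W hf₁W hef1
    have hW'rk' : Module.finrank ℂ W' = 2 * m := by omega
    have hW'sig : ∀ x ∈ W', sig Q x ∈ W' := by
      intro x hx
      refine hW'mem (sig Q x) (hWsig x (hW'le hx)) ?_ ?_
      · rw [← he₁σ, om_sig_sig hAc hQA, hW'e x hx, map_zero]
      · rw [← hf₁σ, om_sig_sig hAc hQA, hW'f x hx, map_zero]
    obtain ⟨e', f', hmem_e', hmem_f', hσe', hσf', goe, gof, goef⟩ := IH W' hW'sig hW'nd hW'rk'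
    have cr_oe : ∀ x ∈ W', om A x e₁ = 0 := by
      intro x hx; rw [om_antisymm hA, hW'e x hx]; ring
    have cr_of : ∀ x ∈ W', om A x f₁ = 0 := by
      intro x hx; rw [om_antisymm hA, hW'f x hx]; ring
    refine ⟨Fin.cons e₁ e', Fin.cons f₁ f', ?_, ?_, ?_, ?_, ?_, ?_, ?_⟩
    · intro i
      induction i using Fin.cases with
      | zero => simpa using he₁W
      | succ i' => simpa using hW'le (hmem_e' i')
    · intro i
      induction i using Fin.cases with
      | zero => simpa using hf₁W
      | succ i' => simpa using hW'le (hmem_f' i')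
    · intro i
      induction i using Fin.cases with
      | zero => simpa using he₁σ
      | succ i' => simpa using hσe' i'
    · intro i
      induction i using Fin.cases with
      | zero => simpa using hf₁σ
      | succ i' => simpa using hσf' i'
    · intro i j
      have := consGram (om A) e' e' (fun _ => 0) e₁ e₁
        (by simpa using om_self hA e₁) (fun j => hW'e _ (hmem_e' j)) (fun i => cr_oe _ (hmem_e' i))
        (fun i j => by simpa using goe i j)
      simpa using this i j
    · intro i j
      have := consGram (om A) f' f' (fun _ => 0) f₁ f₁
        (by simpa using om_self hA f₁) (fun j => hW'f _ (hmem_f' j)) (fun i => cr_of _ (hmem_f' i))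
        (fun i j => by simpa using gof i j)
      simpa using this i j
    · exact consGram (om A) e' f' (fun _ => 1) e₁ f₁
        (by simpa using hef1) (fun j => hW'e _ (hmem_f' j)) (fun i => cr_of _ (hmem_e' i))
        (fun i j => by simpa using goef i j)

/-- Schur's lemma: a matrix commuting with an irreducible representation is scalar. -/
lemma schur {Γ : Type*} [Group Γ] [Nonempty ι]
    (ρ : Γ →* Matrix.GeneralLinearGroup ι ℂ) (hirr : MatIrreducible ρ)
    (M : Matrix ι ι ℂ)
    (hM : ∀ γ : Γ, M * (ρ γ : Matrix ι ι ℂ) = (ρ γ : Matrix ι ι ℂ) * M) :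
    ∃ c : ℂ, M = c • 1 := by
  obtain ⟨c, hc⟩ := Module.End.exists_eigenvalue (Matrix.mulVecLin M)
  refine ⟨c, ?_⟩
  set W := Module.End.eigenspace (Matrix.mulVecLin M) c with hW
  have hWinv : ∀ γ : Γ, ∀ x ∈ W, (ρ γ : Matrix ι ι ℂ) *ᵥ x ∈ W := by
    intro γ x hx
    rw [hW, Module.End.mem_eigenspace_iff] at hx ⊢
    simp only [Matrix.mulVecLin_apply] at hx ⊢
    rw [mulVec_mulVec, hM, ← mulVec_mulVec, hx, mulVec_smul]
  have hWtop : W = ⊤ := by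
    rcases hirr W hWinv with h | h
    · exact absurd h hc
    · exact h
  have hall : ∀ x, M *ᵥ x = c • x := by
    intro x
    have hx : x ∈ W := hWtop ▸ Submodule.mem_top
    rw [hW, Module.End.mem_eigenspace_iff] at hx
    simpa using hx
  ext i j
  have := congrFun (hall (Pi.single j 1)) i
  rw [mulVec_single] at this
  simp only [Pi.smul_apply, Matrix.col_apply, MulOpposite.op_one, one_smul] at this
  rw [this]
  simp [Matrix.smul_apply, Matrix.one_apply, Pi.single_apply]

/-- sandwich entry formulas -/
lemma sandwich_apply (T M : Matrix ι ι ℂ) (a b : ι) :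
    (Tᵀ * M * T) a b = om M (fun i => T i a) (fun i => T i b) := by
  simp only [om, Matrix.mul_apply, dotProduct, mulVec, transpose_apply, Finset.sum_mul,
    Finset.mul_sum]
  rw [Finset.sum_comm]
  exact Finset.sum_congr rfl fun k _ => Finset.sum_congr rfl fun l _ => by ring

lemma sandwichH_apply (T M : Matrix ι ι ℂ) (a b : ι) :
    (Tᴴ * M * T) a b = om M (star (fun i => T i a)) (fun i => T i b) := by
  simp only [om, Matrix.mul_apply, dotProduct, mulVec, conjTranspose_apply, Finset.sum_mul,
    Finset.mul_sum, Pi.star_apply]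
  rw [Finset.sum_comm]
  exact Finset.sum_congr rfl fun k _ => Finset.sum_congr rfl fun l _ => by ring

lemma hm_eq (A Q : Matrix ι ι ℂ) (x y : ι → ℂ) :
    hm A Q x y = om (Qᵀ * A) (star x) y := by
  unfold hm om sig
  rw [← vecMul_transpose, ← dotProduct_mulVec, mulVec_mulVec]

/-- cancel via units -/
lemma mcancel {A X Y : Matrix ι ι ℂ} (hA : IsUnit A.det) (h : A * X = A * Y) : X = Y := by
  have := congrArg (fun Z => A⁻¹ * Z) h
  simpa [← Matrix.mul_assoc, Matrix.nonsing_inv_mul A hA] using this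

lemma conj_sandwich_inv {T M N : Matrix ι ι ℂ} (hT : IsUnit T.det) (h : Tᵀ * M * T = N) :
    (T⁻¹)ᵀ * N * T⁻¹ = M := by
  subst h
  rw [transpose_nonsing_inv]
  have h1 : Tᵀ⁻¹ * Tᵀ = 1 := Matrix.nonsing_inv_mul Tᵀ (by simpa [Matrix.det_transpose] using hT)
  have h2 : T * T⁻¹ = 1 := Matrix.mul_nonsing_inv T hT
  calc Tᵀ⁻¹ * (Tᵀ * M * T) * T⁻¹ = Tᵀ⁻¹ * Tᵀ * M * (T * T⁻¹) := by
        simp only [Matrix.mul_assoc]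
    _ = M := by rw [h1, h2, Matrix.one_mul, Matrix.mul_one]

lemma conjH_sandwich_inv {T M N : Matrix ι ι ℂ} (hT : IsUnit T.det) (h : Tᴴ * M * T = N) :
    (T⁻¹)ᴴ * N * T⁻¹ = M := by
  subst h
  rw [conjTranspose_nonsing_inv]
  have h1 : Tᴴ⁻¹ * Tᴴ = 1 := Matrix.nonsing_inv_mul Tᴴ
    (by simpa [Matrix.det_conjTranspose] using hT.star)
  have h2 : T * T⁻¹ = 1 := Matrix.mul_nonsing_inv T hT
  calc Tᴴ⁻¹ * (Tᴴ * M * T) * T⁻¹ = Tᴴ⁻¹ * Tᴴ * M * (T * T⁻¹) := by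
        simp only [Matrix.mul_assoc]
    _ = M := by rw [h1, h2, Matrix.one_mul, Matrix.mul_one]

/-- sorting the signs -/
lemma sortSigns {n : ℕ} (ε : Fin n → ℂ) (hε : ∀ i, ε i = 1 ∨ ε i = -1) :
    ∃ (p q : ℕ) (π : Equiv.Perm (Fin n)), p + q = n ∧
      ∀ k : Fin n, ε (π k) = if (k : ℕ) < p then 1 else -1 := by
  classical
  set s : Fin n → Prop := fun i => ε i = 1 with hs
  set p := Fintype.card {i // s i} with hp
  set q := Fintype.card {i // ¬ s i} with hq
  have hpq : p + q = n := by
    rw [hp, hq, ← Fintype.card_sum]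
    rw [Fintype.card_congr (Equiv.sumCompl s), Fintype.card_fin]
  let e₁ : Fin p ≃ {i // s i} := (Fintype.equivFinOfCardEq rfl).symm
  let e₂ : Fin q ≃ {i // ¬ s i} := (Fintype.equivFinOfCardEq rfl).symm
  let π : Fin n ≃ Fin n :=
    ((finCongr hpq).symm.trans finSumFinEquiv.symm).trans
      ((e₁.sumCongr e₂).trans (Equiv.sumCompl s))
  refine ⟨p, q, π, hpq, ?_⟩
  intro k
  rcases hsum : finSumFinEquiv.symm ((finCongr hpq).symm k) with a | b
  · have hπ : π k = (e₁ a).val := by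
      simp only [π, Equiv.trans_apply, hsum, Equiv.sumCongr_apply, Sum.map_inl,
        Equiv.sumCompl_apply_inl]
    have hka : ((finCongr hpq).symm k : ℕ) = (a : ℕ) := by
      have := congrArg finSumFinEquiv hsum
      rw [Equiv.apply_symm_apply] at this
      rw [this, finSumFinEquiv_apply_left, Fin.coe_castAdd]
    have hklt : (k : ℕ) < p := by
      have h5 : ((finCongr hpq).symm k : ℕ) = (k : ℕ) := by simp
      have h6 := a.isLt
      omega
    rw [hπ, if_pos hklt]
    exact (e₁ a).prop
  · have hπ : π k = (e₂ b).val := by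
      simp only [π, Equiv.trans_apply, hsum, Equiv.sumCongr_apply, Sum.map_inr,
        Equiv.sumCompl_apply_inr]
    have hkb : ((finCongr hpq).symm k : ℕ) = p + (b : ℕ) := by
      have := congrArg finSumFinEquiv hsum
      rw [Equiv.apply_symm_apply] at this
      rw [this, finSumFinEquiv_apply_right, Fin.coe_natAdd]
    have hknlt : ¬ ((k : ℕ) < p) := by
      have h5 : ((finCongr hpq).symm k : ℕ) = (k : ℕ) := by simp
      omega
    rw [hπ, if_neg hknlt]
    rcases hε (e₂ b).val with h | h
    · exact absurd h (e₂ b).prop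
    · exact h

lemma mapc_mul (A B : Matrix ι ι ℂ) :
    (A * B).map (starRingEnd ℂ) = A.map (starRingEnd ℂ) * B.map (starRingEnd ℂ) :=
  Matrix.map_mul

lemma mapc_mapc (A : Matrix ι ι ℂ) :
    (A.map (starRingEnd ℂ)).map (starRingEnd ℂ) = A := by
  ext i j; simp [Matrix.map_apply]

lemma mapc_transpose (A : Matrix ι ι ℂ) :
    (Aᵀ).map (starRingEnd ℂ) = (A.map (starRingEnd ℂ))ᵀ := transpose_map

lemma mapc_smul (t : ℂ) (A : Matrix ι ι ℂ) :
    (t • A).map (starRingEnd ℂ) = (starRingEnd ℂ t) • A.map (starRingEnd ℂ) := by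
  ext i j; simp [Matrix.map_apply]

lemma mapc_one : ((1 : Matrix ι ι ℂ)).map (starRingEnd ℂ) = 1 :=
  Matrix.map_one _ (map_zero _) (map_one _)

lemma det_mapc (A : Matrix ι ι ℂ) :
    (A.map (starRingEnd ℂ)).det = starRingEnd ℂ A.det := by
  rw [← RingHom.mapMatrix_apply, ← RingHom.map_det]

lemma conjT_eq_mapc (M : Matrix ι ι ℂ) : Mᴴ = (M.map (starRingEnd ℂ))ᵀ := rfl

lemma sandwich_assoc (X Y M : Matrix ι ι ℂ) :
    (X * Y)ᵀ * M * (X * Y) = Yᵀ * (Xᵀ * M * X) * Y := by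
  rw [transpose_mul]; simp only [Matrix.mul_assoc]

lemma sandwichH_conj (T R H K : Matrix ι ι ℂ) (hT : IsUnit T.det)
    (hR : Rᴴ * H * R = H) (hK : Tᴴ * H * T = K) :
    (T⁻¹ * R * T)ᴴ * K * (T⁻¹ * R * T) = K := by
  subst hK
  have h2 : T * T⁻¹ = 1 := Matrix.mul_nonsing_inv T hT
  have h2' : Tᴴ⁻¹ * Tᴴ = 1 := Matrix.nonsing_inv_mul Tᴴ
    (by simpa [Matrix.det_conjTranspose] using hT.star)
  have c1 : ∀ X : Matrix ι ι ℂ, T * (T⁻¹ * X) = X := fun X => by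
    rw [← Matrix.mul_assoc, h2, Matrix.one_mul]
  have c2 : ∀ X : Matrix ι ι ℂ, Tᴴ⁻¹ * (Tᴴ * X) = X := fun X => by
    rw [← Matrix.mul_assoc, h2', Matrix.one_mul]
  have h3 : ∀ X : Matrix ι ι ℂ, Rᴴ * (H * (R * X)) = H * X := fun X => by
    have := congrArg (fun Z => Z * X) hR
    simpa only [Matrix.mul_assoc] using this
  rw [conjTranspose_mul, conjTranspose_mul, conjTranspose_nonsing_inv]
  simp only [Matrix.mul_assoc]
  rw [c2, c1, h3]

lemma Jmat_transpose (n : ℕ) : (Jmat n)ᵀ = -(Jmat n) := by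
  ext (i|i) (j|j) <;> simp [Jmat, Matrix.one_apply, eq_comm]

lemma Jmat_mul_Jmat (n : ℕ) : Jmat n * Jmat n = -1 := by
  rw [Jmat, fromBlocks_multiply]
  ext (i|i) (j|j) <;> simp [Matrix.one_apply]

lemma Jmat_mapc (n : ℕ) : (Jmat n).map (starRingEnd ℂ) = Jmat n := by
  ext (i|i) (j|j) <;> simp [Jmat, Matrix.map_apply, Matrix.one_apply, apply_ite]

lemma Jmat_inl_inr {n : ℕ} (i j : Fin n) :
    Jmat n (Sum.inl i) (Sum.inr j) = if i = j then 1 else 0 := by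
  simp [Jmat, Matrix.one_apply]

lemma isUnit_Jmat_det (n : ℕ) : IsUnit (Jmat n).det := by
  have h := congrArg Matrix.det (Jmat_mul_Jmat n)
  rw [Matrix.det_mul, Matrix.det_neg, Matrix.det_one, mul_one] at h
  have he : ((-1 : ℂ)) ^ Fintype.card (Fin n ⊕ Fin n) = 1 := by
    rw [Fintype.card_sum, Fintype.card_fin]
    exact Even.neg_one_pow ⟨n, rfl⟩
  rw [he] at h
  exact IsUnit.of_mul_eq_one _ h


end Stmt5Aux

open Stmt5Aux in
theorem stmt5 {Γ : Type*} [Group Γ] {n : ℕ} (hn : 0 < n)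
    (ρ : Γ →* Matrix.GeneralLinearGroup (Fin n ⊕ Fin n) ℂ)
    (hsp : ∀ γ : Γ, IsSymplectic (ρ γ : Matrix (Fin n ⊕ Fin n) (Fin n ⊕ Fin n) ℂ))
    (hirr : MatIrreducible ρ)
    (P : Matrix (Fin n ⊕ Fin n) (Fin n ⊕ Fin n) ℂ) (hP : IsUnit P)
    (hconj : ∀ γ : Γ, P * (ρ γ : Matrix (Fin n ⊕ Fin n) (Fin n ⊕ Fin n) ℂ) * P⁻¹
        = (ρ γ : Matrix (Fin n ⊕ Fin n) (Fin n ⊕ Fin n) ℂ).map (starRingEnd ℂ)) :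
    ∃ S : Matrix (Fin n ⊕ Fin n) (Fin n ⊕ Fin n) ℂ, IsSymplectic S ∧
      ((∀ γ : Γ,
          (S * (ρ γ : Matrix (Fin n ⊕ Fin n) (Fin n ⊕ Fin n) ℂ) * S⁻¹).map (starRingEnd ℂ)
            = S * (ρ γ : Matrix (Fin n ⊕ Fin n) (Fin n ⊕ Fin n) ℂ) * S⁻¹) ∨
       (∃ p q : ℕ, p + q = n ∧ ∀ γ : Γ,
          (S * (ρ γ : Matrix (Fin n ⊕ Fin n) (Fin n ⊕ Fin n) ℂ) * S⁻¹)ᴴ * Kpq n p *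
              (S * (ρ γ : Matrix (Fin n ⊕ Fin n) (Fin n ⊕ Fin n) ℂ) * S⁻¹)
            = Kpq n p)) := by
  classical
  obtain ⟨i0⟩ : Nonempty (Fin n) := ⟨⟨0, hn⟩⟩
  haveI : Nonempty (Fin n ⊕ Fin n) := ⟨Sum.inl i0⟩
  have hsp' : ∀ γ : Γ, (ρ γ : Matrix (Fin n ⊕ Fin n) (Fin n ⊕ Fin n) ℂ)ᵀ * Jmat n *
      (ρ γ : Matrix (Fin n ⊕ Fin n) (Fin n ⊕ Fin n) ℂ) = Jmat n := hsp
  have hJt : (Jmat n)ᵀ = -(Jmat n) := Jmat_transpose n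
  have hJJ : Jmat n * Jmat n = -1 := Jmat_mul_Jmat n
  have hJud : IsUnit (Jmat n).det := isUnit_Jmat_det n
  have hPd : IsUnit P.det := (Matrix.isUnit_iff_isUnit_det P).mp hP
  have hUρd : ∀ γ : Γ, IsUnit (ρ γ : Matrix (Fin n ⊕ Fin n) (Fin n ⊕ Fin n) ℂ).det :=
    fun γ => (Matrix.isUnit_iff_isUnit_det _).mp ⟨ρ γ, rfl⟩
  -- inverse-free conjugation relation
  have hconj' : ∀ γ : Γ, P * (ρ γ : Matrix (Fin n ⊕ Fin n) (Fin n ⊕ Fin n) ℂ)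
      = (ρ γ : Matrix (Fin n ⊕ Fin n) (Fin n ⊕ Fin n) ℂ).map (starRingEnd ℂ) * P := by
    intro γ
    calc P * (ρ γ : Matrix (Fin n ⊕ Fin n) (Fin n ⊕ Fin n) ℂ)
        = P * (ρ γ : Matrix (Fin n ⊕ Fin n) (Fin n ⊕ Fin n) ℂ) * (P⁻¹ * P) := by
          rw [Matrix.nonsing_inv_mul P hPd, Matrix.mul_one]
      _ = (P * (ρ γ : Matrix (Fin n ⊕ Fin n) (Fin n ⊕ Fin n) ℂ) * P⁻¹) * P := by
          simp only [Matrix.mul_assoc]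
      _ = (ρ γ : Matrix (Fin n ⊕ Fin n) (Fin n ⊕ Fin n) ℂ).map (starRingEnd ℂ) * P := by
          rw [hconj γ]
  have hconjc : ∀ γ : Γ, P.map (starRingEnd ℂ) *
      (ρ γ : Matrix (Fin n ⊕ Fin n) (Fin n ⊕ Fin n) ℂ).map (starRingEnd ℂ)
      = (ρ γ : Matrix (Fin n ⊕ Fin n) (Fin n ⊕ Fin n) ℂ) * P.map (starRingEnd ℂ) := by
    intro γ
    have h := congrArg (fun Z => Z.map (starRingEnd ℂ)) (hconj' γ)
    simp only [mapc_mul, mapc_mapc] at h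
    exact h
  -- Schur: conj(P) * P is scalar
  have hcomm : ∀ γ : Γ, (P.map (starRingEnd ℂ) * P) * (ρ γ : Matrix (Fin n ⊕ Fin n) (Fin n ⊕ Fin n) ℂ) = (ρ γ : Matrix (Fin n ⊕ Fin n) (Fin n ⊕ Fin n) ℂ) * (P.map (starRingEnd ℂ) * P) := by
    intro γ
    calc P.map (starRingEnd ℂ) * P * (ρ γ : Matrix (Fin n ⊕ Fin n) (Fin n ⊕ Fin n) ℂ)
        = P.map (starRingEnd ℂ) * (P * (ρ γ : Matrix (Fin n ⊕ Fin n) (Fin n ⊕ Fin n) ℂ)) := Matrix.mul_assoc _ _ _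
      _ = P.map (starRingEnd ℂ) * ((ρ γ : Matrix (Fin n ⊕ Fin n) (Fin n ⊕ Fin n) ℂ).map (starRingEnd ℂ) * P) := by rw [hconj' γ]
      _ = (P.map (starRingEnd ℂ) * (ρ γ : Matrix (Fin n ⊕ Fin n) (Fin n ⊕ Fin n) ℂ).map (starRingEnd ℂ)) * P := (Matrix.mul_assoc _ _ _).symm
      _ = ((ρ γ : Matrix (Fin n ⊕ Fin n) (Fin n ⊕ Fin n) ℂ) * P.map (starRingEnd ℂ)) * P := by rw [hconjc γ]
      _ = (ρ γ : Matrix (Fin n ⊕ Fin n) (Fin n ⊕ Fin n) ℂ) * (P.map (starRingEnd ℂ) * P) := Matrix.mul_assoc _ _ _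
  obtain ⟨c₀, hc₀⟩ := schur ρ hirr _ hcomm
  -- invariant bilinear form is a multiple of J
  have hXinv : ∀ γ : Γ, (ρ γ : Matrix (Fin n ⊕ Fin n) (Fin n ⊕ Fin n) ℂ)ᵀ *
      (Pᵀ * Jmat n * P) * (ρ γ : Matrix (Fin n ⊕ Fin n) (Fin n ⊕ Fin n) ℂ) = Pᵀ * Jmat n * P := by
    intro γ
    have h2 : ((ρ γ : Matrix (Fin n ⊕ Fin n) (Fin n ⊕ Fin n) ℂ).map (starRingEnd ℂ))ᵀ * Jmat n *
        (ρ γ : Matrix (Fin n ⊕ Fin n) (Fin n ⊕ Fin n) ℂ).map (starRingEnd ℂ) = Jmat n := by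
      have h := congrArg (fun Z => Z.map (starRingEnd ℂ)) (hsp' γ)
      simp only [mapc_mul, mapc_transpose, Jmat_mapc] at h
      exact h
    have h1 := congrArg (fun Z => Zᵀ * Jmat n * Z) (hconj' γ)
    rw [sandwich_assoc, sandwich_assoc, h2] at h1
    exact h1
  have hXcomm : ∀ γ : Γ, (Jmat n * (Pᵀ * Jmat n * P)) * (ρ γ : Matrix (Fin n ⊕ Fin n) (Fin n ⊕ Fin n) ℂ)
      = (ρ γ : Matrix (Fin n ⊕ Fin n) (Fin n ⊕ Fin n) ℂ) * (Jmat n * (Pᵀ * Jmat n * P)) := by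
    intro γ
    have hρtd : IsUnit ((ρ γ : Matrix (Fin n ⊕ Fin n) (Fin n ⊕ Fin n) ℂ)ᵀ).det := by
      rw [Matrix.det_transpose]; exact hUρd γ
    have e1 : Jmat n * ((Jmat n * (Pᵀ * Jmat n * P)) * (ρ γ : Matrix (Fin n ⊕ Fin n) (Fin n ⊕ Fin n) ℂ)) = -((Pᵀ * Jmat n * P) * (ρ γ : Matrix (Fin n ⊕ Fin n) (Fin n ⊕ Fin n) ℂ)) := by
      rw [← Matrix.mul_assoc, ← Matrix.mul_assoc, hJJ, neg_one_mul, Matrix.neg_mul]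
    have side1 : (ρ γ : Matrix (Fin n ⊕ Fin n) (Fin n ⊕ Fin n) ℂ)ᵀ * (Jmat n * ((Jmat n * (Pᵀ * Jmat n * P)) * (ρ γ : Matrix (Fin n ⊕ Fin n) (Fin n ⊕ Fin n) ℂ))) = -(Pᵀ * Jmat n * P) := by
      rw [e1, Matrix.mul_neg, ← Matrix.mul_assoc, hXinv γ]
    have e2 : (ρ γ : Matrix (Fin n ⊕ Fin n) (Fin n ⊕ Fin n) ℂ)ᵀ * (Jmat n * ((ρ γ : Matrix (Fin n ⊕ Fin n) (Fin n ⊕ Fin n) ℂ) * (Jmat n * (Pᵀ * Jmat n * P))))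
        = ((ρ γ : Matrix (Fin n ⊕ Fin n) (Fin n ⊕ Fin n) ℂ)ᵀ * Jmat n * (ρ γ : Matrix (Fin n ⊕ Fin n) (Fin n ⊕ Fin n) ℂ)) * (Jmat n * (Pᵀ * Jmat n * P)) := by
      simp only [Matrix.mul_assoc]
    have side2 : (ρ γ : Matrix (Fin n ⊕ Fin n) (Fin n ⊕ Fin n) ℂ)ᵀ * (Jmat n * ((ρ γ : Matrix (Fin n ⊕ Fin n) (Fin n ⊕ Fin n) ℂ) * (Jmat n * (Pᵀ * Jmat n * P)))) = -(Pᵀ * Jmat n * P) := by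
      rw [e2, hsp' γ, ← Matrix.mul_assoc, hJJ, neg_one_mul]
    have key := mcancel hρtd (side2.trans side1.symm)
    exact (mcancel hJud key).symm
  obtain ⟨μ, hμ⟩ := schur ρ hirr _ hXcomm
  have hXeq : Pᵀ * Jmat n * P = (-μ) • Jmat n := by
    have h1 : Jmat n * (Jmat n * (Pᵀ * Jmat n * P)) = -(Pᵀ * Jmat n * P) := by
      rw [← Matrix.mul_assoc, hJJ, neg_one_mul]
    rw [hμ, Matrix.mul_smul, Matrix.mul_one] at h1
    have h2 := congrArg Neg.neg h1
    simp only [neg_neg] at h2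
    exact h2.symm.trans (neg_smul μ (Jmat n)).symm
  set lam := -μ with hlamdef
  have hlamne : lam ≠ 0 := by
    intro h
    rw [h, zero_smul] at hXeq
    have hXu : IsUnit (Pᵀ * Jmat n * P).det := by
      rw [Matrix.det_mul, Matrix.det_mul, Matrix.det_transpose]
      exact (hPd.mul hJud).mul hPd
    rw [hXeq] at hXu
    simp [Matrix.det_zero] at hXu
  have hPcJP : (P.map (starRingEnd ℂ))ᵀ * Jmat n * P.map (starRingEnd ℂ)
      = (starRingEnd ℂ lam) • Jmat n := by
    have h := congrArg (fun Z => Z.map (starRingEnd ℂ)) hXeq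
    simp only [mapc_mul, mapc_transpose, mapc_smul, Jmat_mapc] at h
    exact h
  have hscal : c₀ * c₀ = starRingEnd ℂ lam * lam := by
    have h1 : (P.map (starRingEnd ℂ) * P)ᵀ * Jmat n * (P.map (starRingEnd ℂ) * P)
        = (c₀ * c₀) • Jmat n := by
      rw [hc₀, transpose_smul, transpose_one, Matrix.smul_mul, Matrix.one_mul,
        Matrix.mul_smul, Matrix.mul_one, smul_smul]
    have h2 : (P.map (starRingEnd ℂ) * P)ᵀ * Jmat n * (P.map (starRingEnd ℂ) * P)
        = (starRingEnd ℂ lam * lam) • Jmat n := by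
      rw [sandwich_assoc, hPcJP, Matrix.mul_smul, Matrix.smul_mul, hXeq, smul_smul]
    have h3 := h1.symm.trans h2
    have h4 := congrFun (congrFun h3 (Sum.inl i0)) (Sum.inr i0)
    simpa [Matrix.smul_apply, Jmat_inl_inr] using h4
  -- normalize P
  obtain ⟨t, ht⟩ := IsAlgClosed.exists_pow_nat_eq (lam⁻¹) (n := 2) (by norm_num)
  have htt : t * t = lam⁻¹ := by rw [← sq]; exact ht
  set P₁ := t • P with hP₁def
  have hconj₁ : ∀ γ : Γ, P₁ * (ρ γ : Matrix (Fin n ⊕ Fin n) (Fin n ⊕ Fin n) ℂ) = (ρ γ : Matrix (Fin n ⊕ Fin n) (Fin n ⊕ Fin n) ℂ).map (starRingEnd ℂ) * P₁ := by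
    intro γ
    rw [hP₁def, Matrix.smul_mul, Matrix.mul_smul, hconj' γ]
  have hX1 : P₁ᵀ * Jmat n * P₁ = Jmat n := by
    have ha : P₁ᵀ * Jmat n * P₁ = (t * t) • (Pᵀ * Jmat n * P) := by
      rw [hP₁def, transpose_smul, Matrix.smul_mul, Matrix.smul_mul, Matrix.mul_smul, smul_smul]
    rw [ha, hXeq, smul_smul,
      show t * t * lam = 1 from by rw [htt, inv_mul_cancel₀ hlamne], one_smul]
  set c₁ := starRingEnd ℂ t * t * c₀ with hc₁def
  have hc1 : P₁.map (starRingEnd ℂ) * P₁ = c₁ • 1 := by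
    rw [hP₁def, mapc_smul, Matrix.smul_mul, Matrix.mul_smul, hc₀, smul_smul, smul_smul]
  have hc1sq : c₁ * c₁ = 1 := by
    have hlamcne : starRingEnd ℂ lam ≠ 0 := by simpa using hlamne
    have h1 : c₁ * c₁ = (starRingEnd ℂ (t * t)) * ((t * t) * (c₀ * c₀)) := by
      rw [hc₁def, map_mul (starRingEnd ℂ) t t]; ring
    rw [h1, htt, hscal, map_inv₀]
    field_simp
  have hc₁ne : c₁ ≠ 0 := by
    intro h; rw [h, mul_zero] at hc1sq; exact zero_ne_one hc1sq
  set Q := P₁.map (starRingEnd ℂ) with hQdef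
  have hQmapc : Q.map (starRingEnd ℂ) = P₁ := mapc_mapc P₁
  have hQQc : Q * Q.map (starRingEnd ℂ) = c₁ • 1 := by
    rw [hQmapc]; exact hc1
  have hQJ : Qᵀ * Jmat n * Q = Jmat n := by
    have h := congrArg (fun Z => Z.map (starRingEnd ℂ)) hX1
    simp only [mapc_mul, mapc_transpose, Jmat_mapc] at h
    exact h
  have hQρc : ∀ γ : Γ, Q * (ρ γ : Matrix (Fin n ⊕ Fin n) (Fin n ⊕ Fin n) ℂ).map (starRingEnd ℂ)
      = (ρ γ : Matrix (Fin n ⊕ Fin n) (Fin n ⊕ Fin n) ℂ) * Q := by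
    intro γ
    have h := congrArg (fun Z => Z.map (starRingEnd ℂ)) (hconj₁ γ)
    simp only [mapc_mul, mapc_mapc] at h
    rw [← hQdef] at h
    exact h
  have hP₁d : IsUnit P₁.det :=
    Matrix.isUnit_det_of_left_inverse (B := c₁⁻¹ • Q) (by
      rw [Matrix.smul_mul, hc1, smul_smul, inv_mul_cancel₀ hc₁ne, one_smul])
  have hQd : IsUnit Q.det :=
    Matrix.isUnit_det_of_right_inverse (B := c₁⁻¹ • P₁) (by
      rw [Matrix.mul_smul, hc1, smul_smul, inv_mul_cancel₀ hc₁ne, one_smul])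
  -- setup for induction on ⊤
  have hWsig : ∀ x ∈ (⊤ : Submodule ℂ ((Fin n ⊕ Fin n) → ℂ)), sig Q x ∈ (⊤ : Submodule ℂ _) :=
    fun x _ => Submodule.mem_top
  have hndtop : ∀ x ∈ (⊤ : Submodule ℂ ((Fin n ⊕ Fin n) → ℂ)),
      (∀ y ∈ (⊤ : Submodule ℂ ((Fin n ⊕ Fin n) → ℂ)), om (Jmat n) x y = 0) → x = 0 := by
    intro x _ hx
    have h2 : x ᵥ* Jmat n = 0 := by
      ext i
      have h5 := hx (Pi.single i 1) Submodule.mem_top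
      rw [om, dotProduct_mulVec, dotProduct_single, mul_one] at h5
      simpa using h5
    have h3 : x ᵥ* (Jmat n * (-(Jmat n))) = 0 := by
      rw [← vecMul_vecMul, h2, Matrix.zero_vecMul]
    rwa [Matrix.mul_neg, Jmat_mul_Jmat, neg_neg, Matrix.vecMul_one] at h3
  have hrktop : Module.finrank ℂ (⊤ : Submodule ℂ ((Fin n ⊕ Fin n) → ℂ)) = 2 * n := by
    rw [finrank_top, Module.finrank_pi]
    simp [Fintype.card_sum]
    ring
  rcases mul_self_eq_one_iff.mp hc1sq with hc₁1 | hc₁m1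
  · -- REAL CASE
    have hQQ1 : Q * Q.map (starRingEnd ℂ) = (1 : ℂ) • 1 := by rw [hQQc, hc₁1]
    obtain ⟨e, f, -, -, hfixe, hfixf, goe, gof, goef⟩ :=
      realInd (Jmat n) Q hJt (Jmat_mapc n) hQJ hQQ1 n ⊤ hWsig hndtop hrktop
    set T : Matrix (Fin n ⊕ Fin n) (Fin n ⊕ Fin n) ℂ :=
      Matrix.of (fun i j => Sum.elim e f j i) with hTdef
    have happ : ∀ (M : Matrix (Fin n ⊕ Fin n) (Fin n ⊕ Fin n) ℂ) a b, (Tᵀ * M * T) a b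
        = om M (Sum.elim e f a) (Sum.elim e f b) := by
      intro M a b; rw [sandwich_apply]; rfl
    have hTJ : Tᵀ * Jmat n * T = Jmat n := by
      ext a b
      rw [happ]
      rcases a with i | i <;> rcases b with j | j <;>
        simp only [Sum.elim_inl, Sum.elim_inr]
      · rw [goe i j]; simp [Jmat]
      · rw [goef i j]; simp [Jmat, Matrix.one_apply]
      · rw [om_antisymm hJt, goef j i]; simp [Jmat, Matrix.one_apply, eq_comm]
      · rw [gof i j]; simp [Jmat]
    have hTd : IsUnit T.det := by
      have hdet := congrArg Matrix.det hTJ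
      rw [Matrix.det_mul, Matrix.det_mul, Matrix.det_transpose] at hdet
      have hJd0 : (Jmat n).det ≠ 0 := hJud.ne_zero
      have h9 : T.det * T.det = 1 := by
        have h8 : T.det * T.det * (Jmat n).det = 1 * (Jmat n).det := by
          rw [one_mul]; linear_combination hdet
        exact mul_right_cancel₀ hJd0 h8
      exact IsUnit.of_mul_eq_one _ h9
    have hsymp : IsSymplectic (T⁻¹) := conj_sandwich_inv hTd hTJ
    have hQT : Q * T.map (starRingEnd ℂ) = T := by
      ext i a
      have h1 : (Q * T.map (starRingEnd ℂ)) i a = sig Q (Sum.elim e f a) i := by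
        simp only [Matrix.mul_apply, Matrix.map_apply, sig, mulVec, dotProduct, Pi.star_apply]
        refine Finset.sum_congr rfl fun k _ => ?_
        rfl
      rw [h1]
      rcases a with k | k
      · rw [show Sum.elim e f (Sum.inl k) = e k from rfl, hfixe k]; rfl
      · rw [show Sum.elim e f (Sum.inr k) = f k from rfl, hfixf k]; rfl
    refine ⟨T⁻¹, hsymp, Or.inl ?_⟩
    intro γ
    rw [Matrix.nonsing_inv_nonsing_inv T hTd]
    have hTc : T.map (starRingEnd ℂ) = Q⁻¹ * T := by
      have h1 := congrArg (fun Z => Q⁻¹ * Z) hQT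
      simpa [← Matrix.mul_assoc, Matrix.nonsing_inv_mul Q hQd] using h1
    have hTinvc : (T⁻¹).map (starRingEnd ℂ) = T⁻¹ * Q := by
      have h1 : T.map (starRingEnd ℂ) * (T⁻¹).map (starRingEnd ℂ) = 1 := by
        rw [← mapc_mul, Matrix.mul_nonsing_inv T hTd, mapc_one]
      have h2 : (T.map (starRingEnd ℂ))⁻¹ = (T⁻¹).map (starRingEnd ℂ) :=
        Matrix.inv_eq_right_inv h1
      rw [← h2, hTc, Matrix.mul_inv_rev, Matrix.nonsing_inv_nonsing_inv Q hQd]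
    rw [mapc_mul, mapc_mul, hTinvc, hTc]
    calc T⁻¹ * Q * (ρ γ : Matrix (Fin n ⊕ Fin n) (Fin n ⊕ Fin n) ℂ).map (starRingEnd ℂ) * (Q⁻¹ * T)
        = T⁻¹ * ((Q * (ρ γ : Matrix (Fin n ⊕ Fin n) (Fin n ⊕ Fin n) ℂ).map (starRingEnd ℂ)) * (Q⁻¹ * T)) := by
          simp only [Matrix.mul_assoc]
      _ = T⁻¹ * (((ρ γ : Matrix (Fin n ⊕ Fin n) (Fin n ⊕ Fin n) ℂ) * Q) * (Q⁻¹ * T)) := by rw [hQρc γ]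
      _ = T⁻¹ * ((ρ γ : Matrix (Fin n ⊕ Fin n) (Fin n ⊕ Fin n) ℂ) * ((Q * Q⁻¹) * T)) := by simp only [Matrix.mul_assoc]
      _ = T⁻¹ * (ρ γ : Matrix (Fin n ⊕ Fin n) (Fin n ⊕ Fin n) ℂ) * T := by
          rw [Matrix.mul_nonsing_inv Q hQd, Matrix.one_mul, ← Matrix.mul_assoc]
  · -- QUATERNIONIC CASE
    have hQQm : Q * Q.map (starRingEnd ℂ) = (-1 : ℂ) • 1 := by rw [hQQc, hc₁m1]
    obtain ⟨e, f, ε, -, -, hεpm, goe, gof, goef, ghe, ghf, ghef, ghfe⟩ :=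
      quatInd (Jmat n) Q hJt (Jmat_mapc n) hQJ hQQm n ⊤ hWsig hndtop hrktop
    obtain ⟨p, q, π, hpq, hsortπ⟩ := sortSigns ε hεpm
    set e2 : Fin n → ((Fin n ⊕ Fin n) → ℂ) := fun k => e (π k) with he2def
    set f2 : Fin n → ((Fin n ⊕ Fin n) → ℂ) := fun k => f (π k) with hf2def
    have goe2 : ∀ i j, om (Jmat n) (e2 i) (e2 j) = 0 := fun i j => goe (π i) (π j)
    have gof2 : ∀ i j, om (Jmat n) (f2 i) (f2 j) = 0 := fun i j => gof (π i) (π j)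
    have goef2 : ∀ i j, om (Jmat n) (e2 i) (f2 j) = if i = j then 1 else 0 := by
      intro i j; rw [he2def, hf2def]
      simp only []
      rw [goef (π i) (π j)]
      simp [Equiv.apply_eq_iff_eq]
    have ghe2 : ∀ i j, hm (Jmat n) Q (e2 i) (e2 j)
        = if i = j then (if (i : ℕ) < p then 1 else -1) else 0 := by
      intro i j
      rw [he2def]
      simp only []
      rw [ghe (π i) (π j), hsortπ i]
      simp [Equiv.apply_eq_iff_eq]
    have ghf2 : ∀ i j, hm (Jmat n) Q (f2 i) (f2 j)
        = if i = j then (if (i : ℕ) < p then 1 else -1) else 0 := by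
      intro i j
      rw [hf2def]
      simp only []
      rw [ghf (π i) (π j), hsortπ i]
      simp [Equiv.apply_eq_iff_eq]
    have ghef2 : ∀ i j, hm (Jmat n) Q (e2 i) (f2 j) = 0 := fun i j => ghef (π i) (π j)
    have ghfe2 : ∀ i j, hm (Jmat n) Q (f2 i) (e2 j) = 0 := fun i j => ghfe (π i) (π j)
    set T : Matrix (Fin n ⊕ Fin n) (Fin n ⊕ Fin n) ℂ :=
      Matrix.of (fun i j => Sum.elim e2 f2 j i) with hTdef
    have happ : ∀ (M : Matrix (Fin n ⊕ Fin n) (Fin n ⊕ Fin n) ℂ) a b, (Tᵀ * M * T) a b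
        = om M (Sum.elim e2 f2 a) (Sum.elim e2 f2 b) := by
      intro M a b; rw [sandwich_apply]; rfl
    have happH : ∀ (M : Matrix (Fin n ⊕ Fin n) (Fin n ⊕ Fin n) ℂ) a b, (Tᴴ * M * T) a b
        = om M (star (Sum.elim e2 f2 a)) (Sum.elim e2 f2 b) := by
      intro M a b; rw [sandwichH_apply]; rfl
    have hTJ : Tᵀ * Jmat n * T = Jmat n := by
      ext a b
      rw [happ]
      rcases a with i | i <;> rcases b with j | j <;>
        simp only [Sum.elim_inl, Sum.elim_inr]
      · rw [goe2 i j]; simp [Jmat]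
      · rw [goef2 i j]; simp [Jmat, Matrix.one_apply]
      · rw [om_antisymm hJt, goef2 j i]; simp [Jmat, Matrix.one_apply, eq_comm]
      · rw [gof2 i j]; simp [Jmat]
    have hTd : IsUnit T.det := by
      have hdet := congrArg Matrix.det hTJ
      rw [Matrix.det_mul, Matrix.det_mul, Matrix.det_transpose] at hdet
      have hJd0 : (Jmat n).det ≠ 0 := hJud.ne_zero
      have h9 : T.det * T.det = 1 := by
        have h8 : T.det * T.det * (Jmat n).det = 1 * (Jmat n).det := by
          rw [one_mul]; linear_combination hdet
        exact mul_right_cancel₀ hJd0 h8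
      exact IsUnit.of_mul_eq_one _ h9
    have hsymp : IsSymplectic (T⁻¹) := conj_sandwich_inv hTd hTJ
    have hTH : Tᴴ * (Qᵀ * Jmat n) * T = Kpq n p := by
      ext a b
      rw [happH]
      rcases a with i | i <;> rcases b with j | j <;>
        simp only [Sum.elim_inl, Sum.elim_inr] <;>
        rw [show ∀ x y, om (Qᵀ * Jmat n) (star x) y = hm (Jmat n) Q x y from
          fun x y => (hm_eq (Jmat n) Q x y).symm]
      · rw [ghe2 i j]; simp [Kpq, Ipq, Matrix.diagonal_apply]
      · rw [ghef2 i j]; simp [Kpq]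
      · rw [ghfe2 i j]; simp [Kpq]
      · rw [ghf2 i j]; simp [Kpq, Ipq, Matrix.diagonal_apply]
    refine ⟨T⁻¹, hsymp, Or.inr ⟨p, q, hpq, ?_⟩⟩
    intro γ
    rw [Matrix.nonsing_inv_nonsing_inv T hTd]
    have hHinv : (ρ γ : Matrix (Fin n ⊕ Fin n) (Fin n ⊕ Fin n) ℂ)ᴴ * (Qᵀ * Jmat n) * (ρ γ : Matrix (Fin n ⊕ Fin n) (Fin n ⊕ Fin n) ℂ)
        = Qᵀ * Jmat n := by
      rw [conjT_eq_mapc]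
      calc ((ρ γ : Matrix (Fin n ⊕ Fin n) (Fin n ⊕ Fin n) ℂ).map (starRingEnd ℂ))ᵀ * (Qᵀ * Jmat n) * (ρ γ : Matrix (Fin n ⊕ Fin n) (Fin n ⊕ Fin n) ℂ)
          = (Q * (ρ γ : Matrix (Fin n ⊕ Fin n) (Fin n ⊕ Fin n) ℂ).map (starRingEnd ℂ))ᵀ * Jmat n * (ρ γ : Matrix (Fin n ⊕ Fin n) (Fin n ⊕ Fin n) ℂ) := by
            rw [transpose_mul]; simp only [Matrix.mul_assoc]
        _ = ((ρ γ : Matrix (Fin n ⊕ Fin n) (Fin n ⊕ Fin n) ℂ) * Q)ᵀ * Jmat n * (ρ γ : Matrix (Fin n ⊕ Fin n) (Fin n ⊕ Fin n) ℂ) := by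
            rw [hQρc γ]
        _ = Qᵀ * ((ρ γ : Matrix (Fin n ⊕ Fin n) (Fin n ⊕ Fin n) ℂ)ᵀ * Jmat n * (ρ γ : Matrix (Fin n ⊕ Fin n) (Fin n ⊕ Fin n) ℂ)) := by
            rw [transpose_mul]; simp only [Matrix.mul_assoc]
        _ = Qᵀ * Jmat n := by rw [hsp' γ]
    exact sandwichH_conj T _ _ _ hTd hHinv hTH


end
end

section
/- Let Γ be a group, n a positive integer, and ρ₁, ρ₂ : Γ → O(n,ℂ) two irreducible representations. If there exists Q ∈ GL(n,ℂ) such that Q·ρ₁(γ)·Q⁻¹ = ρ₂(γ) for all γ ∈ Γ, then there exists Q₁ ∈ O(n,ℂ) such that Q₁·ρ₁(γ)·Q₁⁻¹ = ρ₂(γ) for all γ ∈ Γ. -/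
open Matrix

noncomputable section

/-- `M ∈ O(n,ℂ)`, i.e. `ᵀM M = Iₙ`. -/
def IsOrthoC {n : ℕ} (M : Matrix (Fin n) (Fin n) ℂ) : Prop :=
  Mᵀ * M = 1

theorem stmt6 {Γ : Type*} [Group Γ] {n : ℕ} (hn : 0 < n)
    (ρ₁ ρ₂ : Γ →* Matrix.GeneralLinearGroup (Fin n) ℂ)
    (ho₁ : ∀ γ : Γ, IsOrthoC (ρ₁ γ : Matrix (Fin n) (Fin n) ℂ))
    (ho₂ : ∀ γ : Γ, IsOrthoC (ρ₂ γ : Matrix (Fin n) (Fin n) ℂ))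
    (hirr₁ : MatIrreducible ρ₁) (hirr₂ : MatIrreducible ρ₂)
    (Q : Matrix (Fin n) (Fin n) ℂ) (hQ : IsUnit Q)
    (hconj : ∀ γ : Γ, Q * (ρ₁ γ : Matrix (Fin n) (Fin n) ℂ) * Q⁻¹
        = (ρ₂ γ : Matrix (Fin n) (Fin n) ℂ)) :
    ∃ Q₁ : Matrix (Fin n) (Fin n) ℂ, IsOrthoC Q₁ ∧
      ∀ γ : Γ, Q₁ * (ρ₁ γ : Matrix (Fin n) (Fin n) ℂ) * Q₁⁻¹
        = (ρ₂ γ : Matrix (Fin n) (Fin n) ℂ) := by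
  classical
  haveI : NeZero n := ⟨hn.ne'⟩
  have hQdet : IsUnit Q.det := (Matrix.isUnit_iff_isUnit_det Q).mp hQ
  have hQQi : Q * Q⁻¹ = 1 := Matrix.mul_nonsing_inv Q hQdet
  have hQiQ : Q⁻¹ * Q = 1 := Matrix.nonsing_inv_mul Q hQdet
  set S : Matrix (Fin n) (Fin n) ℂ := Qᵀ * Q with hS
  -- each ρ γ is invertible with inverse its transpose
  have hρ₁inv : ∀ γ, (ρ₁ γ : Matrix (Fin n) (Fin n) ℂ) * (ρ₁ γ : Matrix (Fin n) (Fin n) ℂ)ᵀ = 1 := by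
    intro γ
    have h := ho₁ γ
    have hU : IsUnit (ρ₁ γ : Matrix (Fin n) (Fin n) ℂ) := ⟨ρ₁ γ, rfl⟩
    have hinv : (ρ₁ γ : Matrix (Fin n) (Fin n) ℂ)⁻¹ = (ρ₁ γ : Matrix (Fin n) (Fin n) ℂ)ᵀ :=
      (Matrix.inv_eq_left_inv h).symm ▸ rfl
    rw [← hinv, Matrix.mul_nonsing_inv _ ((Matrix.isUnit_iff_isUnit_det _).mp hU)]
  -- S commutes with ρ₁
  have hcomm : ∀ γ, S * (ρ₁ γ : Matrix (Fin n) (Fin n) ℂ)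
      = (ρ₁ γ : Matrix (Fin n) (Fin n) ℂ) * S := by
    intro γ
    have h2 := ho₂ γ
    rw [← hconj γ] at h2
    have h2' : (Q⁻¹)ᵀ * ((ρ₁ γ : Matrix (Fin n) (Fin n) ℂ)ᵀ * (Qᵀ *
        (Q * ((ρ₁ γ : Matrix (Fin n) (Fin n) ℂ) * Q⁻¹)))) = 1 := by
      have := h2
      simp only [IsOrthoC, Matrix.transpose_mul] at this
      calc (Q⁻¹)ᵀ * ((ρ₁ γ : Matrix (Fin n) (Fin n) ℂ)ᵀ * (Qᵀ *
              (Q * ((ρ₁ γ : Matrix (Fin n) (Fin n) ℂ) * Q⁻¹))))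
          = (Q * (ρ₁ γ : Matrix (Fin n) (Fin n) ℂ) * Q⁻¹)ᵀ *
              (Q * (ρ₁ γ : Matrix (Fin n) (Fin n) ℂ) * Q⁻¹) := by
            simp only [Matrix.transpose_mul]; noncomm_ring
        _ = 1 := h2
    -- deduce ρ₁ᵀ * S * ρ₁ = S
    have key : (ρ₁ γ : Matrix (Fin n) (Fin n) ℂ)ᵀ * S * (ρ₁ γ : Matrix (Fin n) (Fin n) ℂ) = S := by
      have h3 := congrArg (fun M => Qᵀ * M * Q) h2'
      have hQT : Qᵀ * (Q⁻¹)ᵀ = 1 := by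
        rw [← Matrix.transpose_mul, hQiQ, Matrix.transpose_one]
      calc (ρ₁ γ : Matrix (Fin n) (Fin n) ℂ)ᵀ * S * (ρ₁ γ : Matrix (Fin n) (Fin n) ℂ)
          = (ρ₁ γ : Matrix (Fin n) (Fin n) ℂ)ᵀ * S * (ρ₁ γ : Matrix (Fin n) (Fin n) ℂ)
              * (Q⁻¹ * Q) := by rw [hQiQ, mul_one]
        _ = (Qᵀ * (Q⁻¹)ᵀ) * ((ρ₁ γ : Matrix (Fin n) (Fin n) ℂ)ᵀ * S *
              (ρ₁ γ : Matrix (Fin n) (Fin n) ℂ)) * (Q⁻¹ * Q) := by rw [hQT, one_mul]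
        _ = Qᵀ * ((Q⁻¹)ᵀ * ((ρ₁ γ : Matrix (Fin n) (Fin n) ℂ)ᵀ * (Qᵀ *
              (Q * ((ρ₁ γ : Matrix (Fin n) (Fin n) ℂ) * Q⁻¹))))) * Q := by
            simp only [hS, Matrix.mul_assoc]
        _ = Qᵀ * 1 * Q := by rw [h2']
        _ = S := by rw [mul_one]
    have := congrArg (fun M => (ρ₁ γ : Matrix (Fin n) (Fin n) ℂ) * M) key
    calc S * (ρ₁ γ : Matrix (Fin n) (Fin n) ℂ)
        = ((ρ₁ γ : Matrix (Fin n) (Fin n) ℂ) * (ρ₁ γ : Matrix (Fin n) (Fin n) ℂ)ᵀ) *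
            S * (ρ₁ γ : Matrix (Fin n) (Fin n) ℂ) := by rw [hρ₁inv γ, one_mul]
      _ = (ρ₁ γ : Matrix (Fin n) (Fin n) ℂ) * ((ρ₁ γ : Matrix (Fin n) (Fin n) ℂ)ᵀ * S *
            (ρ₁ γ : Matrix (Fin n) (Fin n) ℂ)) := by simp only [Matrix.mul_assoc]
      _ = (ρ₁ γ : Matrix (Fin n) (Fin n) ℂ) * S := by rw [key]
  -- Schur: S = c • 1
  have : Nontrivial (Fin n → ℂ) := ⟨⟨0, Pi.single ⟨0, hn⟩ 1, by
    intro h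
    have := congrFun h ⟨0, hn⟩
    simp at this⟩⟩
  obtain ⟨c, hc⟩ := Module.End.exists_eigenvalue (S.mulVecLin)
  have hW : Module.End.eigenspace (S.mulVecLin) c = ⊤ := by
    have hstab : ∀ γ : Γ, ∀ x ∈ Module.End.eigenspace (S.mulVecLin) c,
        Matrix.mulVec (ρ₁ γ : Matrix (Fin n) (Fin n) ℂ) x ∈
          Module.End.eigenspace (S.mulVecLin) c := by
      intro γ x hx
      rw [Module.End.mem_eigenspace_iff] at hx ⊢
      simp only [Matrix.mulVecLin_apply] at hx ⊢
      rw [Matrix.mulVec_mulVec, hcomm γ, ← Matrix.mulVec_mulVec, hx, Matrix.mulVec_smul]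
    rcases hirr₁ (Module.End.eigenspace (S.mulVecLin) c) hstab with h | h
    · exact absurd h hc
    · exact h
  have hSc : S = c • (1 : Matrix (Fin n) (Fin n) ℂ) := by
    ext i j
    have hx : S *ᵥ (Pi.single j 1 : Fin n → ℂ) = c • (Pi.single j 1 : Fin n → ℂ) := by
      have hmem : (Pi.single j 1 : Fin n → ℂ) ∈ Module.End.eigenspace (S.mulVecLin) c := by
        rw [hW]; trivial
      rw [Module.End.mem_eigenspace_iff] at hmem
      simpa using hmem
    have h2 := congrFun hx i
    simp only [Matrix.mulVec_single, mul_one, Pi.smul_apply, Pi.single_apply,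
      smul_eq_mul, MulOpposite.op_one, one_smul, Matrix.col_apply] at h2
    rw [h2]
    simp [Matrix.one_apply, Pi.single_apply, mul_ite]
  -- c ≠ 0
  have hSunit : IsUnit S :=
    ((Matrix.isUnit_iff_isUnit_det _).mpr (by rwa [Matrix.det_transpose])).mul hQ
  have hc0 : c ≠ 0 := by
    rintro rfl
    rw [hSc, zero_smul] at hSunit
    have : Nontrivial (Matrix (Fin n) (Fin n) ℂ) := inferInstance
    exact not_isUnit_zero hSunit
  obtain ⟨μ, hμ⟩ := IsAlgClosed.exists_pow_nat_eq c (n := 2) (by norm_num)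
  have hμ0 : μ ≠ 0 := by
    rintro rfl
    rw [zero_pow (by norm_num)] at hμ
    exact hc0 hμ.symm
  refine ⟨μ⁻¹ • Q, ?_, ?_⟩
  · show (μ⁻¹ • Q)ᵀ * (μ⁻¹ • Q) = 1
    rw [Matrix.transpose_smul, Matrix.smul_mul, Matrix.mul_smul, ← hS, hSc,
      smul_smul, smul_smul]
    rw [show μ⁻¹ * μ⁻¹ * c = 1 by field_simp [← hμ]; exact hμ.symm, one_smul]
  · intro γ
    have hinv : (μ⁻¹ • Q)⁻¹ = μ • Q⁻¹ := by
      apply Matrix.inv_eq_right_inv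
      rw [Matrix.smul_mul, Matrix.mul_smul, hQQi, smul_smul, inv_mul_cancel₀ hμ0, one_smul]
    rw [hinv, Matrix.smul_mul, Matrix.smul_mul, Matrix.mul_smul, smul_smul,
      inv_mul_cancel₀ hμ0, one_smul, hconj γ]
end
end

section
/- Let n be a positive integer and let H ∈ GL(2n,ℂ) be a Hermitian matrix such that ᵀH·H = −I_{2n}. Then there exists M ∈ GL(2n,ℂ) such that M*·H·M = I_{n,n} (where I_{n,n} = diag(Iₙ, −Iₙ)) and ᵀM·M equals the 2n×2n block matrix [[0, Iₙ],[Iₙ, 0]]. -/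
open Matrix

noncomputable section

/-- The matrix `I_{n,n} = diag(Iₙ, −Iₙ)` of size `2n`. -/
def Inn (n : ℕ) : Matrix (Fin n ⊕ Fin n) (Fin n ⊕ Fin n) ℂ :=
  Matrix.fromBlocks 1 0 0 (-1)

/-- The block matrix `E = [[0, Iₙ],[Iₙ, 0]]` of size `2n`. -/
def Emat (n : ℕ) : Matrix (Fin n ⊕ Fin n) (Fin n ⊕ Fin n) ℂ :=
  Matrix.fromBlocks 0 1 1 0

theorem stmt9 {n : ℕ} (hn : 0 < n)
    (H : Matrix (Fin n ⊕ Fin n) (Fin n ⊕ Fin n) ℂ) (hunit : IsUnit H)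
    (hherm : H.IsHermitian) (hHH : Hᵀ * H = -1) :
    ∃ M : Matrix (Fin n ⊕ Fin n) (Fin n ⊕ Fin n) ℂ, IsUnit M ∧
      Mᴴ * H * M = Inn n ∧ Mᵀ * M = Emat n := by
  classical
  set U : Matrix (Fin n ⊕ Fin n) (Fin n ⊕ Fin n) ℂ := (hherm.eigenvectorUnitary : Matrix (Fin n ⊕ Fin n) (Fin n ⊕ Fin n) ℂ) with hU
  set d : (Fin n ⊕ Fin n) → ℝ := hherm.eigenvalues with hd
  have hUU : Uᴴ * U = 1 := by
    rw [hU]; exact Unitary.coe_star_mul_self hherm.eigenvectorUnitary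
  have hUU' : U * Uᴴ = 1 := by
    rw [hU]; exact Unitary.coe_mul_star_self hherm.eigenvectorUnitary
  have hspec : H = U * diagonal (fun k => (d k : ℂ)) * Uᴴ := by
    convert hherm.spectral_theorem using 2
    rfl
  have hd0 : ∀ k, d k ≠ 0 := by
    intro k hk
    have h1 : H.det = ∏ i, (hherm.eigenvalues i : ℂ) := hherm.det_eq_prod_eigenvalues
    have h2 : H.det ≠ 0 := (Matrix.isUnit_iff_isUnit_det H).mp hunit |>.ne_zero
    rw [h1] at h2
    exact h2 (Finset.prod_eq_zero (Finset.mem_univ k) (by rw [← hd, hk]; norm_num))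
  set S : Matrix (Fin n ⊕ Fin n) (Fin n ⊕ Fin n) ℂ := Uᵀ * U with hSdef
  have h1 : Uᵀ * Uᴴᵀ = 1 := by rw [← Matrix.transpose_mul, hUU, Matrix.transpose_one]
  have hDSD : diagonal (fun k => (d k : ℂ)) * S * diagonal (fun k => (d k : ℂ)) = -S := by
    have e1 := congrArg (fun X => Uᵀ * X * U) hHH
    simp only [hspec, Matrix.transpose_mul, Matrix.diagonal_transpose, Matrix.mul_assoc] at e1
    rw [hUU] at e1
    simp only [Matrix.mul_one, Matrix.mul_neg, Matrix.neg_mul, Matrix.one_mul] at e1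
    rw [← Matrix.mul_assoc Uᵀ Uᴴᵀ, h1, Matrix.one_mul] at e1
    rw [hSdef]
    simp only [Matrix.mul_assoc]
    rw [e1]
  have hSentry : ∀ a b : Fin n ⊕ Fin n, (d a : ℂ) * S a b * (d b : ℂ) = -S a b := by
    intro a b
    have := congrFun (congrFun hDSD a) b
    simpa [Matrix.diagonal_mul, Matrix.mul_diagonal] using this
  have hSzero : ∀ a b : Fin n ⊕ Fin n, (d a : ℝ) * d b ≠ -1 → S a b = 0 := by
    intro a b hab
    have h := hSentry a b
    have h2 : ((d a : ℂ) * (d b : ℂ) + 1) * S a b = 0 := by ring_nf; linear_combination h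
    rcases mul_eq_zero.mp h2 with h3 | h3
    · exfalso
      apply hab
      have : ((d a * d b : ℝ) : ℂ) = ((-1 : ℝ) : ℂ) := by push_cast; linear_combination h3
      exact_mod_cast this
    · exact h3
  have hcard : Fintype.card {k : Fin n ⊕ Fin n // 0 < d k} = n := by
    set s : (Fin n ⊕ Fin n) → ℂ := fun k => if 0 < d k then 1 else -1 with hs
    set Ds := diagonal s with hDs
    set W := U * Ds * Uᴴ with hW
    have h1 : Uᴴᵀ * Uᵀ = 1 := by rw [← Matrix.transpose_mul, hUU', Matrix.transpose_one]
    have hss : ∀ k, s k * s k = 1 := by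
      intro k; by_cases h : 0 < d k <;> simp [hs, h]
    have hsS : ∀ a b : Fin n ⊕ Fin n, s a * S a b * s b = -S a b := by
      intro a b
      by_cases hab : (d a : ℝ) * d b = -1
      · have hsab : s a * s b = -1 := by
          rcases (mul_neg_iff.mp (by rw [hab]; norm_num : (d a : ℝ) * d b < 0)) with ⟨h1', h2'⟩ | ⟨h1', h2'⟩
          · simp [hs, h1', not_lt.mpr (le_of_lt h2')]
          · simp [hs, h2', not_lt.mpr (le_of_lt h1')]
        calc s a * S a b * s b = (s a * s b) * S a b := by ring
          _ = -S a b := by rw [hsab]; ring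
      · rw [hSzero a b hab]; simp
    have hDsS : Ds * S * Ds = -S := by
      ext a b
      simpa [hDs, Matrix.diagonal_mul, Matrix.mul_diagonal] using hsS a b
    have hWW : W * W = 1 := by
      rw [hW]
      simp only [Matrix.mul_assoc]
      rw [← Matrix.mul_assoc Uᴴ U, hUU, Matrix.one_mul, ← Matrix.mul_assoc Ds Ds, hDs,
        Matrix.diagonal_mul_diagonal]
      have : (fun k => s k * s k) = fun _ => (1 : ℂ) := funext hss
      rw [this, Matrix.diagonal_one, Matrix.one_mul, hUU']
    have hWtW : Wᵀ * W = -1 := by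
      have hDst : Dsᵀ = Ds := by rw [hDs, Matrix.diagonal_transpose]
      rw [hW]
      simp only [Matrix.transpose_mul, hDst, Matrix.mul_assoc]
      rw [← Matrix.mul_assoc Uᵀ U, ← hSdef, ← Matrix.mul_assoc S Ds, ← Matrix.mul_assoc Ds (S * Ds),
        ← Matrix.mul_assoc Ds S, hDsS]
      simp only [Matrix.neg_mul, Matrix.mul_neg, hSdef, Matrix.mul_assoc]
      rw [hUU', Matrix.mul_one, ← Matrix.transpose_mul, hUU', Matrix.transpose_one]
    have hWt : Wᵀ = -W := by
      have h4 : Wᵀ * W * W = -W := by rw [hWtW]; simp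
      rwa [Matrix.mul_assoc, hWW, Matrix.mul_one] at h4
    have htr : Matrix.trace W = ∑ k, s k := by
      rw [hW, Matrix.trace_mul_cycle, hUU, Matrix.one_mul, hDs, Matrix.trace_diagonal]
    have hsum : ∑ k, s k = 0 := by
      have h2 : Matrix.trace W = -Matrix.trace W := by
        conv_lhs => rw [← Matrix.trace_transpose, hWt]
        simp
      have h3 : Matrix.trace W = 0 := by linear_combination h2 / 2
      rw [← htr, h3]
    set P := Finset.univ.filter (fun k : Fin n ⊕ Fin n => 0 < d k) with hP
    set Q := Finset.univ.filter (fun k : Fin n ⊕ Fin n => ¬ 0 < d k) with hQ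
    have hsplit : ∑ k ∈ P, s k + ∑ k ∈ Q, s k = ∑ k, s k :=
      Finset.sum_filter_add_sum_filter_not Finset.univ _ s
    have hPs : ∑ k ∈ P, s k = (P.card : ℂ) := by
      have h5 : ∀ k ∈ P, s k = 1 := fun k hk => by simp [hs, (Finset.mem_filter.mp hk).2]
      rw [Finset.sum_congr rfl h5, Finset.sum_const, nsmul_eq_mul, mul_one]
    have hQs : ∑ k ∈ Q, s k = -(Q.card : ℂ) := by
      have h5 : ∀ k ∈ Q, s k = -1 := fun k hk => by simp [hs, (Finset.mem_filter.mp hk).2]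
      rw [Finset.sum_congr rfl h5, Finset.sum_const, nsmul_eq_mul, mul_neg_one]
    have hPQc : (P.card : ℂ) = (Q.card : ℂ) := by
      rw [hPs, hQs, hsum] at hsplit
      linear_combination hsplit
    have hPQ : P.card = Q.card := Nat.cast_inj.mp hPQc
    have hPQ2 : P.card + Q.card = 2 * n := by
      have := Finset.card_filter_add_card_filter_not
        (s := (Finset.univ : Finset (Fin n ⊕ Fin n))) (p := fun k => 0 < d k)
      rw [hP, hQ]
      simpa [Fintype.card_sum, Fintype.card_fin, two_mul] using this
    have hPn : P.card = n := by omega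
    rw [Fintype.card_subtype]
    exact hPn
  set τ : Fin n ≃ {k : Fin n ⊕ Fin n // 0 < d k} := (Fintype.equivFinOfCardEq hcard).symm with hτ
  set σ : Fin n → (Fin n ⊕ Fin n) := fun i => (τ i).1 with hσ
  have hσinj : Function.Injective σ := fun i j h => τ.injective (Subtype.ext h)
  have hσpos : ∀ i, 0 < d (σ i) := fun i => (τ i).2
  set c : Fin n → ((Fin n ⊕ Fin n) → ℂ) := fun i => (fun j => U j (σ i)) with hc
  set γ : Fin n → ℝ := fun i => (Real.sqrt (d (σ i)))⁻¹ with hγ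
  have hγpos : ∀ i, 0 < γ i := fun i => by
    rw [hγ]; exact inv_pos.mpr (Real.sqrt_pos.mpr (hσpos i))
  have hγsqR : ∀ i, (γ i : ℝ) * γ i * d (σ i) = 1 := by
    intro i
    rw [hγ, ← mul_inv]
    rw [Real.mul_self_sqrt (le_of_lt (hσpos i))]
    exact inv_mul_cancel₀ (hd0 _)
  have hγsq : ∀ i, (γ i : ℂ) * (γ i : ℂ) * (d (σ i) : ℂ) = 1 := by
    intro i; exact_mod_cast hγsqR i
  have hγsq' : ∀ i, ((γ i)⁻¹ : ℂ) * ((γ i)⁻¹ : ℂ) * ((d (σ i) : ℂ))⁻¹ = 1 := by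
    intro i
    have h1 : ((γ i)⁻¹ * (γ i)⁻¹ * (d (σ i))⁻¹ : ℝ) = 1 := by
      rw [← mul_inv, ← mul_inv, hγsqR i, inv_one]
    exact_mod_cast h1
  have f1 : ∀ a b : Fin n ⊕ Fin n,
      star (fun j => U j a) ⬝ᵥ (fun j => U j b) = if a = b then (1:ℂ) else 0 := by
    intro a b
    have h1 : (Uᴴ * U) a b = star (fun j => U j a) ⬝ᵥ (fun j => U j b) := by
      simp [Matrix.mul_apply, dotProduct, Matrix.conjTranspose_apply]
    rw [hUU] at h1
    rw [← h1, Matrix.one_apply]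
  have f2 : ∀ i j, c i ⬝ᵥ c j = 0 := by
    intro i j
    have h1 : (Uᵀ * U) (σ i) (σ j) = c i ⬝ᵥ c j := by
      simp [Matrix.mul_apply, dotProduct, Matrix.transpose_apply, hc]
    rw [← h1, ← hSdef]
    apply hSzero
    have := mul_pos (hσpos i) (hσpos j)
    intro h; rw [h] at this; linarith
  have f3 : ∀ i j, star (c i) ⬝ᵥ c j = if i = j then (1 : ℂ) else 0 := by
    intro i j
    rw [hc, f1]
    by_cases h : i = j
    · simp [h]
    · rw [if_neg (fun hh : σ i = σ j => h (hσinj hh)), if_neg h]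
  have g1 : ∀ i j, c i ⬝ᵥ star (c j) = if i = j then (1 : ℂ) else 0 := by
    intro i j
    have h1 : c i ⬝ᵥ star (c j) = star (star (c i) ⬝ᵥ c j) := by
      simp [dotProduct, Pi.star_apply, star_sum, mul_comm]
    rw [h1, f3]
    split <;> simp
  have g2 : ∀ i j, star (c i) ⬝ᵥ star (c j) = 0 := by
    intro i j
    have h1 : star (c i) ⬝ᵥ star (c j) = star (c i ⬝ᵥ c j) := by
      simp [dotProduct, Pi.star_apply, star_sum]
    rw [h1, f2]; simp
  have hHU : H * U = U * diagonal (fun k => (d k : ℂ)) := by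
    rw [hspec, Matrix.mul_assoc, hUU, Matrix.mul_one]
  have f4 : ∀ i, H *ᵥ c i = (d (σ i) : ℂ) • c i := by
    intro i
    funext j
    have h1 : (H * U) j (σ i) = (H *ᵥ c i) j := by
      simp [Matrix.mul_apply, Matrix.mulVec, dotProduct, hc]
    rw [hHU] at h1
    rw [← h1, Matrix.mul_diagonal]
    simp [hc, mul_comm]
  have hHent : ∀ j k, star (H k j) = H j k := by
    intro j k
    conv_rhs => rw [← hherm]
    simp [Matrix.conjTranspose_apply]
  have f5 : ∀ i, H *ᵥ star (c i) = (-((d (σ i) : ℂ))⁻¹) • star (c i) := by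
    intro i
    have hxv : Hᵀ *ᵥ c i = (-((d (σ i) : ℂ))⁻¹) • c i := by
      have e1 : Hᵀ *ᵥ (H *ᵥ c i) = -(c i) := by
        rw [Matrix.mulVec_mulVec, hHH, Matrix.neg_mulVec, Matrix.one_mulVec]
      rw [f4 i, Matrix.mulVec_smul] at e1
      have hd : (d (σ i) : ℂ) ≠ 0 := by exact_mod_cast hd0 (σ i)
      calc Hᵀ *ᵥ c i = ((d (σ i) : ℂ))⁻¹ • ((d (σ i) : ℂ) • (Hᵀ *ᵥ c i)) := by
            rw [smul_smul, inv_mul_cancel₀ hd, one_smul]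
        _ = (-((d (σ i) : ℂ))⁻¹) • c i := by rw [e1]; simp [smul_smul]
    have hstar : H *ᵥ star (c i) = star (Hᵀ *ᵥ c i) := by
      funext j
      simp only [Matrix.mulVec, dotProduct, Pi.star_apply, star_sum, star_mul',
        Matrix.transpose_apply]
      refine Finset.sum_congr rfl fun k _ => ?_
      rw [hHent j k, mul_comm]
    rw [hstar, hxv, star_smul]
    congr 1
    simp
  set colM : (Fin n ⊕ Fin n) → ((Fin n ⊕ Fin n) → ℂ) :=
    Sum.elim (fun i => (γ i : ℂ) • c i) (fun i => ((γ i : ℂ))⁻¹ • star (c i)) with hcolM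
  set M : Matrix (Fin n ⊕ Fin n) (Fin n ⊕ Fin n) ℂ := Matrix.of (fun j k => colM k j) with hM
  have hγc : ∀ i, star ((γ i : ℂ)) = (γ i : ℂ) := fun i => by
    simp [Complex.star_def, Complex.conj_ofReal]
  have hγc' : ∀ i, star ((γ i : ℂ))⁻¹ = ((γ i : ℂ))⁻¹ := fun i => by
    rw [star_inv₀, hγc]
  have hγ0 : ∀ i, (γ i : ℂ) ≠ 0 := fun i => by
    exact_mod_cast ne_of_gt (hγpos i)
  have entry1 : ∀ a b, (Mᵀ * M) a b = colM a ⬝ᵥ colM b := by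
    intro a b
    simp [Matrix.mul_apply, Matrix.transpose_apply, dotProduct, hM]
  have entry2 : ∀ (X : Matrix (Fin n ⊕ Fin n) (Fin n ⊕ Fin n) ℂ) (a b : Fin n ⊕ Fin n),
      (Mᴴ * X * M) a b = star (colM a) ⬝ᵥ (X *ᵥ colM b) := by
    intro X a b
    simp only [Matrix.mul_apply, Matrix.conjTranspose_apply, hM, Matrix.of_apply, dotProduct,
      Matrix.mulVec, Pi.star_apply, Finset.sum_mul, Finset.mul_sum]
    rw [Finset.sum_comm]
    exact Finset.sum_congr rfl fun j _ => Finset.sum_congr rfl fun k _ => by ring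
  have hMM : Mᵀ * M = Emat n := by
    ext a b
    rw [entry1]
    rcases a with i | i <;> rcases b with j | j
    · simp [hcolM, Emat, smul_dotProduct, dotProduct_smul, f2]
    · simp only [hcolM, Sum.elim_inl, Sum.elim_inr, smul_dotProduct, dotProduct_smul,
        smul_eq_mul, g1, Emat, Matrix.fromBlocks_apply₁₂]
      by_cases h : i = j
      · subst h
        rw [if_pos rfl, Matrix.one_apply_eq, mul_one, inv_mul_cancel₀ (hγ0 i)]
      · rw [if_neg h, Matrix.one_apply_ne h]
        simp
    · simp only [hcolM, Sum.elim_inl, Sum.elim_inr, smul_dotProduct, dotProduct_smul,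
        smul_eq_mul, f3, Emat, Matrix.fromBlocks_apply₂₁]
      by_cases h : i = j
      · subst h
        rw [if_pos rfl, Matrix.one_apply_eq, mul_one, mul_inv_cancel₀ (hγ0 i)]
      · rw [if_neg h, Matrix.one_apply_ne h]
        simp
    · simp [hcolM, Emat, smul_dotProduct, dotProduct_smul, g2]
  have hMHM : Mᴴ * H * M = Inn n := by
    ext a b
    rw [entry2]
    rcases a with i | i <;> rcases b with j | j
    · simp only [hcolM, Sum.elim_inl, star_smul, hγc, Matrix.mulVec_smul, f4,
        smul_dotProduct, dotProduct_smul, smul_eq_mul, f3, Inn, Matrix.fromBlocks_apply₁₁]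
      by_cases h : i = j
      · subst h
        rw [if_pos rfl, Matrix.one_apply_eq, mul_one]
        rw [show (γ i:ℂ) * ((d (σ i):ℂ) * (γ i:ℂ)) = (γ i:ℂ) * (γ i:ℂ) * (d (σ i):ℂ) by ring]
        exact hγsq i
      · rw [if_neg h, Matrix.one_apply_ne h]
        simp
    · simp only [hcolM, Sum.elim_inl, Sum.elim_inr, star_smul, hγc, Matrix.mulVec_smul, f5,
        smul_dotProduct, dotProduct_smul, smul_eq_mul, g2, Inn, Matrix.fromBlocks_apply₁₂]
      simp
    · simp only [hcolM, Sum.elim_inl, Sum.elim_inr, star_smul, hγc', star_star,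
        Matrix.mulVec_smul, f4, smul_dotProduct, dotProduct_smul, smul_eq_mul, f2,
        Inn, Matrix.fromBlocks_apply₂₁]
      simp
    · simp only [hcolM, Sum.elim_inr, star_smul, hγc', star_star, Matrix.mulVec_smul, f5,
        smul_dotProduct, dotProduct_smul, smul_eq_mul, g1, Inn, Matrix.fromBlocks_apply₂₂]
      by_cases h : i = j
      · subst h
        rw [if_pos rfl]
        simp only [Matrix.neg_apply, Matrix.one_apply_eq]
        linear_combination (-1 : ℂ) * hγsq' i
      · rw [if_neg h]
        simp [Matrix.one_apply_ne h]
  have hE : (Emat n) * (Emat n) = 1 := by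
    rw [Emat, Matrix.fromBlocks_multiply]
    simp [Matrix.fromBlocks_one]
  have hdetE : det (Emat n) ≠ 0 := by
    intro h
    have := congrArg det hE
    rw [det_mul, h, det_one, mul_zero] at this
    exact zero_ne_one this
  have hdetM : det M ≠ 0 := by
    intro h
    have h1 := congrArg det hMM
    rw [det_mul, det_transpose, h, mul_zero] at h1
    exact hdetE h1.symm
  exact ⟨M, (Matrix.isUnit_iff_isUnit_det M).mpr (isUnit_iff_ne_zero.mpr hdetM), hMHM, hMM⟩
end
end

section
/- Let n be a positive integer, U a 2n×2n unitary complex matrix (U*·U = I_{2n}) and H a 2n×2n positive definite Hermitian complex matrix. If the product U·H belongs to Sp(2n,ℂ), then U ∈ Sp(2n,ℂ) and H ∈ Sp(2n,ℂ). -/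
open Matrix ComplexOrder

noncomputable section

namespace SympAux

variable {n : ℕ}

lemma J_mul_J : Jmat n * Jmat n = -1 := by
  simp only [Jmat, Matrix.fromBlocks_multiply]
  rw [← Matrix.fromBlocks_one, Matrix.fromBlocks_neg, neg_zero]
  norm_num

lemma J_transpose : (Jmat n)ᵀ = -Jmat n := by
  simp only [Jmat, Matrix.fromBlocks_transpose, Matrix.fromBlocks_neg]
  norm_num

lemma J_conjTranspose : (Jmat n)ᴴ = -Jmat n := by
  simp only [Jmat, Matrix.fromBlocks_conjTranspose, Matrix.fromBlocks_neg]
  norm_num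

lemma J_map_star : (Jmat n).map (starRingEnd ℂ) = Jmat n := by
  have : (Jmat n)ᴴ = ((Jmat n).map (starRingEnd ℂ))ᵀ := rfl
  have h := congrArg Matrix.transpose this
  rw [Matrix.transpose_transpose] at h
  rw [← h, J_conjTranspose, Matrix.transpose_neg, J_transpose, neg_neg]

lemma symp_left_inv {M : Matrix (Fin n ⊕ Fin n) (Fin n ⊕ Fin n) ℂ}
    (hM : IsSymplectic M) : (-(Jmat n) * Mᵀ * Jmat n) * M = 1 := by
  have : (-(Jmat n) * Mᵀ * Jmat n) * M = -(Jmat n) * (Mᵀ * Jmat n * M) := by noncomm_ring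
  rw [this, hM]
  rw [neg_mul, J_mul_J, neg_neg]

lemma symp_right_inv {M : Matrix (Fin n ⊕ Fin n) (Fin n ⊕ Fin n) ℂ}
    (hM : IsSymplectic M) : M * (-(Jmat n) * Mᵀ * Jmat n) = 1 :=
  mul_eq_one_comm.mp (symp_left_inv hM)

lemma symp_transpose {M : Matrix (Fin n ⊕ Fin n) (Fin n ⊕ Fin n) ℂ}
    (hM : IsSymplectic M) : IsSymplectic Mᵀ := by
  unfold IsSymplectic
  rw [Matrix.transpose_transpose]
  have h := symp_right_inv hM
  have h2 : M * (-(Jmat n)) * Mᵀ * (Jmat n * Jmat n) = Jmat n := by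
    calc M * (-(Jmat n)) * Mᵀ * (Jmat n * Jmat n)
        = (M * (-(Jmat n) * Mᵀ * Jmat n)) * Jmat n := by noncomm_ring
      _ = Jmat n := by rw [h, one_mul]
  rw [J_mul_J] at h2
  have : M * Jmat n * Mᵀ = -(M * (-(Jmat n)) * Mᵀ) := by noncomm_ring
  rw [this]
  have : M * -Jmat n * Mᵀ = -Jmat n := by
    calc M * -Jmat n * Mᵀ = -(M * (-(Jmat n)) * Mᵀ * (-1)) := by noncomm_ring
      _ = -(Jmat n) := by rw [h2]
  rw [this, neg_neg]

lemma symp_mul {M N : Matrix (Fin n ⊕ Fin n) (Fin n ⊕ Fin n) ℂ}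
    (hM : IsSymplectic M) (hN : IsSymplectic N) : IsSymplectic (M * N) := by
  unfold IsSymplectic
  rw [Matrix.transpose_mul]
  calc Nᵀ * Mᵀ * Jmat n * (M * N) = Nᵀ * (Mᵀ * Jmat n * M) * N := by noncomm_ring
    _ = Nᵀ * Jmat n * N := by rw [hM]
    _ = Jmat n := hN

lemma symp_conj {M : Matrix (Fin n ⊕ Fin n) (Fin n ⊕ Fin n) ℂ}
    (hM : IsSymplectic M) : IsSymplectic (M.map (starRingEnd ℂ)) := by
  unfold IsSymplectic
  have h := congrArg (fun X => X.map (starRingEnd ℂ)) hM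
  simpa [Matrix.map_mul, Matrix.transpose_map, J_map_star] using h

lemma symp_conjTranspose {M : Matrix (Fin n ⊕ Fin n) (Fin n ⊕ Fin n) ℂ}
    (hM : IsSymplectic M) : IsSymplectic Mᴴ := by
  have : Mᴴ = (M.map (starRingEnd ℂ))ᵀ := rfl
  rw [this]
  exact symp_transpose (symp_conj hM)

lemma symp_inv {M N : Matrix (Fin n ⊕ Fin n) (Fin n ⊕ Fin n) ℂ}
    (hM : IsSymplectic M) (h1 : M * N = 1) (h2 : N * M = 1) : IsSymplectic N := by
  unfold IsSymplectic
  calc Nᵀ * Jmat n * N = Nᵀ * (Mᵀ * Jmat n * M) * N := by rw [hM]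
    _ = (M * N)ᵀ * Jmat n * (M * N) := by rw [Matrix.transpose_mul]; noncomm_ring
    _ = Jmat n := by rw [h1]; simp

lemma posdef_conj {A N : Matrix (Fin n ⊕ Fin n) (Fin n ⊕ Fin n) ℂ}
    (hA : A.PosDef) (hN : IsUnit N) : (Nᴴ * A * N).PosDef := by
  refine PosDef.of_dotProduct_mulVec_pos ?_ ?_
  · have := hA.1
    unfold Matrix.IsHermitian at *
    simp only [Matrix.conjTranspose_mul, Matrix.conjTranspose_conjTranspose, this]
    rw [mul_assoc]
  · intro x hx
    have hNx : N.mulVec x ≠ 0 := by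
      have : Function.Injective N.mulVec := Matrix.mulVec_injective_iff_isUnit.mpr hN
      intro h
      exact hx (this (by simpa using h))
    have key : star x ⬝ᵥ (Nᴴ * A * N).mulVec x
        = star (N.mulVec x) ⬝ᵥ A.mulVec (N.mulVec x) := by
      rw [← Matrix.mulVec_mulVec, ← Matrix.mulVec_mulVec, Matrix.dotProduct_mulVec,
        ← Matrix.star_mulVec]
    rw [key]
    exact hA.dotProduct_mulVec_pos hNx

end SympAux

open SympAux in
theorem stmt14 {n : ℕ} (hn : 0 < n)
    (U H : Matrix (Fin n ⊕ Fin n) (Fin n ⊕ Fin n) ℂ)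
    (hU : Uᴴ * U = 1) (hH : H.PosDef)
    (hUH : IsSymplectic (U * H)) :
    IsSymplectic U ∧ IsSymplectic H := by
  -- H is invertible
  have hHunit : IsUnit H := hH.isUnit
  have hHdet : IsUnit H.det := (Matrix.isUnit_iff_isUnit_det H).mp hHunit
  have hHinv : H⁻¹ * H = 1 := Matrix.nonsing_inv_mul H hHdet
  have hHinv' : H * H⁻¹ = 1 := Matrix.mul_nonsing_inv H hHdet
  -- (U*H)ᴴ is symplectic, hence H*H = (U*H)ᴴ*(U*H) is symplectic
  have hMH : IsSymplectic ((U * H)ᴴ) := symp_conjTranspose hUH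
  have hHH : IsSymplectic (H * H) := by
    have h2 := symp_mul hMH hUH
    have e : (U * H)ᴴ * (U * H) = H * H := by
      rw [Matrix.conjTranspose_mul]
      calc Hᴴ * Uᴴ * (U * H) = Hᴴ * (Uᴴ * U) * H := by noncomm_ring
        _ = Hᴴ * H := by rw [hU, mul_one]
        _ = H * H := by rw [hH.1]
    rwa [e] at h2
  -- A := Jᴴ Hᵀ J is positive definite
  obtain ⟨A, hA_def⟩ : ∃ A : Matrix (Fin n ⊕ Fin n) (Fin n ⊕ Fin n) ℂ,
      A = (Jmat n)ᴴ * Hᵀ * Jmat n := ⟨_, rfl⟩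
  have hJJ' : Jmat n * (Jmat n)ᴴ = 1 := by
    rw [J_conjTranspose, mul_neg, J_mul_J, neg_neg]
  have hJ'J : (Jmat n)ᴴ * Jmat n = 1 := by
    rw [J_conjTranspose, neg_mul, J_mul_J, neg_neg]
  have hJunit : IsUnit (Jmat n) := ⟨⟨Jmat n, (Jmat n)ᴴ, hJJ', hJ'J⟩, rfl⟩
  have hApd : A.PosDef := hA_def ▸ posdef_conj hH.transpose hJunit
  -- A * A = (H⁻¹)²
  have hAA : A * A * (H * H) = 1 := by
    have e1 : A * A = (Jmat n)ᴴ * (H * H)ᵀ * Jmat n := by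
      rw [hA_def, Matrix.transpose_mul]
      calc (Jmat n)ᴴ * Hᵀ * Jmat n * ((Jmat n)ᴴ * Hᵀ * Jmat n)
          = (Jmat n)ᴴ * Hᵀ * (Jmat n * (Jmat n)ᴴ) * Hᵀ * Jmat n := by noncomm_ring
        _ = (Jmat n)ᴴ * (Hᵀ * Hᵀ) * Jmat n := by rw [hJJ']; noncomm_ring
    calc A * A * (H * H) = (Jmat n)ᴴ * ((H * H)ᵀ * Jmat n * (H * H)) := by rw [e1]; noncomm_ring
      _ = (Jmat n)ᴴ * Jmat n := by rw [hHH]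
      _ = 1 := hJ'J
  have hsq : A * A = H⁻¹ * H⁻¹ := by
    have eHH : (H * H) * (H⁻¹ * H⁻¹) = 1 := by
      have e : (H * H) * (H⁻¹ * H⁻¹) = H * (H * H⁻¹) * H⁻¹ := by noncomm_ring
      rw [e, hHinv', mul_one, hHinv']
    calc A * A = (A * A) * ((H * H) * (H⁻¹ * H⁻¹)) := by rw [eHH, mul_one]
      _ = (A * A * (H * H)) * (H⁻¹ * H⁻¹) := by noncomm_ring
      _ = H⁻¹ * H⁻¹ := by rw [hAA, one_mul]
  have hA_eq : A = H⁻¹ :=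
    by open scoped MatrixOrder Matrix.Norms.L2Operator in
      exact (CFC.mul_self_eq_mul_self_iff A H⁻¹ hApd.posSemidef.nonneg hH.inv.posSemidef.nonneg).mp hsq
  -- H is symplectic
  have hHs : IsSymplectic H := by
    unfold IsSymplectic
    calc Hᵀ * Jmat n * H = (Jmat n * (Jmat n)ᴴ) * Hᵀ * Jmat n * H := by rw [hJJ', one_mul]
      _ = Jmat n * A * H := by rw [hA_def]; noncomm_ring
      _ = Jmat n * (H⁻¹ * H) := by rw [hA_eq, mul_assoc]
      _ = Jmat n := by rw [hHinv, mul_one]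
  -- U is symplectic
  have hU_eq : U = (U * H) * H⁻¹ := by rw [mul_assoc, hHinv', mul_one]
  have hUs : IsSymplectic U := by
    rw [hU_eq]
    exact symp_mul hUH (symp_inv hHs hHinv' hHinv)
  exact ⟨hUs, hHs⟩
end
end
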